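/- arXiv:1608.07144 — 9 statements merged into one kernel-verified Lean document; each statement's English description precedes it below -/
import Mathlib

section
/- Let X_p be a weakly p-orderable filter space and let κ = min{|𝒫| : 𝒫 is a nested subfamily of p with ⋂𝒫 = ∅} (this minimum exists since X_p is weakly p-orderable). Then ψ(X_p) ≤ κ ≤ a(X_p). -/
open Set

universe u v w y

/-- The filter space topology on `Option X`: every point `some x` is isolated, and the
neighborhoods of the extra point `none` are the sets `P ∪ {none}` with `P ∈ p`. -/
def filterTop {X : Type u} (p : Filter X) : TopologicalSpace (Option X) where
  IsOpen U := none ∈ U → (Option.some ⁻¹' U) ∈ p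
  isOpen_univ := fun _ => by simp
  isOpen_inter := fun U V hU hV h => by
    rw [Set.preimage_inter]
    exact Filter.inter_mem (hU h.1) (hV h.2)
  isOpen_sUnion := fun S hS h => by
    rw [Set.mem_sUnion] at h
    obtain ⟨U, hUS, hU⟩ := h
    exact Filter.mem_of_superset (hS U hUS hU)
      (Set.preimage_mono (Set.subset_sUnion_of_mem hUS))

/-- A filter is free if `∅ ∉ p` and the intersection of all its members is empty. -/
def IsFree {X : Type u} (p : Filter X) : Prop :=
  (∅ : Set X) ∉ p ∧ ⋂₀ {P : Set X | P ∈ p} = ∅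

/-- A family of sets is nested if any two members are comparable under inclusion. -/
def Nested {X : Type u} (F : Set (Set X)) : Prop :=
  ∀ P ∈ F, ∀ Q ∈ F, P ⊆ Q ∨ Q ⊆ P

/-- The order topology of a linear order: generated by the open rays. -/
def ordTop {Z : Type u} (r : LinearOrder Z) : TopologicalSpace Z :=
  TopologicalSpace.generateFrom
    {S : Set Z | ∃ a : Z, S = {z | r.lt z a} ∨ S = {z | r.lt a z}}

/-- `(Z, t)` is weakly orderable by the linear order `r`: the order topology of `r`
is contained in `t`. -/
def WOBy {Z : Type u} (t : TopologicalSpace Z) (r : LinearOrder Z) : Prop :=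
  ∀ S : Set Z, (ordTop r).IsOpen S → t.IsOpen S

def WeaklyOrderable {Z : Type u} (t : TopologicalSpace Z) : Prop :=
  ∃ r : LinearOrder Z, WOBy t r

/-- Weakly `p`-orderable: weakly orderable by a linear order in which `p` is the maximum. -/
def WeaklyPOrderable {Z : Type u} (t : TopologicalSpace Z) (p : Z) : Prop :=
  ∃ r : LinearOrder Z, WOBy t r ∧ ∀ z : Z, r.le z p

def Orderable {Z : Type u} (t : TopologicalSpace Z) : Prop :=
  ∃ r : LinearOrder Z, ordTop r = t

/-- `p`-orderable: orderable by a linear order in which `p` is the maximum. -/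
def POrderable {Z : Type u} (t : TopologicalSpace Z) (p : Z) : Prop :=
  ∃ r : LinearOrder Z, ordTop r = t ∧ ∀ z : Z, r.le z p

/-- The approaching number of a point `p`: the least cardinality of a set
`A ⊆ Z \ {p}` with `p ∈ closure A`. -/
noncomputable def aNum {Z : Type u} (t : TopologicalSpace Z) (p : Z) : Cardinal.{u} :=
  sInf {c : Cardinal.{u} | ∃ A : Set Z, p ∉ A ∧ p ∈ @closure Z t A ∧ c = Cardinal.mk ↥A}

/-- The pseudo-character of a point `p`: the least cardinality of a family of open sets
whose intersection is `{p}`. -/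
noncomputable def psiNum {Z : Type u} (t : TopologicalSpace Z) (p : Z) : Cardinal.{u} :=
  sInf {c : Cardinal.{u} | ∃ Us : Set (Set Z),
    (∀ V ∈ Us, t.IsOpen V) ∧ ⋂₀ Us = {p} ∧ c = Cardinal.mk ↥Us}

/-- The approaching number of a space: minimum over non-isolated points. -/
noncomputable def aSp {Z : Type u} (t : TopologicalSpace Z) : Cardinal.{u} :=
  sInf {c : Cardinal.{u} | ∃ p : Z, ¬ t.IsOpen ({p} : Set Z) ∧ c = aNum t p}

/-- The pseudo-character of a space: supremum over points. -/
noncomputable def psiSp {Z : Type u} (t : TopologicalSpace Z) : Cardinal.{u} :=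
  ⨆ p : Z, psiNum t p

/-- `‖p‖ = min {|P| : P ∈ p}`. -/
noncomputable def fNorm {X : Type u} (p : Filter X) : Cardinal.{u} :=
  sInf {c : Cardinal.{u} | ∃ P ∈ p, c = Cardinal.mk ↥P}

/-- A selection relation: total and antisymmetric. -/
def SelRel {Z : Type u} (R : Z → Z → Prop) : Prop :=
  (∀ x y : Z, R x y ∨ R y x) ∧ (∀ x y : Z, R x y → R y x → x = y)

/-- Separate continuity of a selection relation: the open rays are open. -/
def SepCont {Z : Type u} (t : TopologicalSpace Z) (R : Z → Z → Prop) : Prop :=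
  ∀ x : Z, t.IsOpen {z | R z x ∧ z ≠ x} ∧ t.IsOpen {z | R x z ∧ x ≠ z}

/-- Continuity of a selection relation (Gutev–Nogura characterization). -/
def ContSel {Z : Type u} (t : TopologicalSpace Z) (R : Z → Z → Prop) : Prop :=
  ∀ x y : Z, R x y → x ≠ y →
    ∃ U V : Set Z, t.IsOpen U ∧ t.IsOpen V ∧ x ∈ U ∧ y ∈ V ∧
      ∀ u ∈ U, ∀ v ∈ V, R u v ∧ u ≠ v

/-- The subspace topology. -/
def subTop {Z : Type u} (t : TopologicalSpace Z) (S : Set Z) : TopologicalSpace ↥S :=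
  TopologicalSpace.induced Subtype.val t

/-- The product topology. -/
def prodTop {A : Type u} {B : Type v} (tA : TopologicalSpace A) (tB : TopologicalSpace B) :
    TopologicalSpace (A × B) :=
  TopologicalSpace.induced Prod.fst tA ⊓ TopologicalSpace.induced Prod.snd tB

/-- `C` is a club (closed unbounded) subset of the ordinal `o`. -/
def Club (o : Ordinal.{u}) (C : Set Ordinal.{u}) : Prop :=
  C ⊆ Set.Iio o ∧ (∀ α < o, ∃ β ∈ C, α ≤ β) ∧
  (∀ α < o, Order.IsSuccLimit α → (∀ β < α, ∃ γ ∈ C, β ≤ γ ∧ γ < α) → α ∈ C)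

/-- `S` is a stationary subset of the ordinal `o`. -/
def StationaryIn (o : Ordinal.{u}) (S : Set Ordinal.{u}) : Prop :=
  S ⊆ Set.Iio o ∧ ∀ C : Set Ordinal.{u}, Club o C → (S ∩ C).Nonempty

/-! When `P` ranges over a family in `p` with empty intersection, the open sets `P ∪ {p}` meet
exactly in `{p}`, so `ψ ≤ κ`. The open rays above points of `X` are neighbourhoods of the maximum
`p`, so their traces on `X` are nested members of `p`; if `A` approaches `p`, every such ray meets
`A`, hence the rays above the points of `A` already have empty intersection, so `κ ≤ a`. -/

open Cardinal

section FilterSpace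

variable {X : Type u} {p : Filter X}

theorem psiNum_none_le_mk_of_sInter_eq_empty {F : Set (Set X)} (hFp : ∀ P ∈ F, P ∈ p)
    (hF : ⋂₀ F = ∅) : psiNum (filterTop p) none ≤ #F := by
  refine (csInf_le' ?_).trans (mk_image_le (f := fun P => insert none (some '' P)))
  refine ⟨_, ?_, ?_, rfl⟩
  · rintro _ ⟨P, hP, rfl⟩ -
    convert hFp P hP using 1
    ext
    simp
  · ext (_ | x)
    · simp
    · simpa using (eq_empty_iff_forall_notMem.1 hF x)

theorem none_mem_closure_range_some (hp : (∅ : Set X) ∉ p) :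
    none ∈ @closure (Option X) (filterTop p) (range some) := by
  let := filterTop p
  have : p.NeBot := ⟨mt Filter.empty_mem_iff_bot.2 hp⟩
  refine mem_closure_iff.2 fun U hU hnU => ?_
  obtain ⟨x, hx⟩ := Filter.nonempty_of_mem (hU hnU)
  exact ⟨some x, hx, mem_range_self x⟩

end FilterSpace

section WeaklyOrdered

variable {X : Type u} {p : Filter X} [LinearOrder (Option X)]

def rayTrace (a : X) : Set X := some ⁻¹' Ioi (some a)

theorem nested_image_rayTrace (B : Set X) : Nested (rayTrace '' B) := by
  rintro _ ⟨a, -, rfl⟩ _ ⟨b, -, rfl⟩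
  rcases le_total (some a) (some b) with h | h
  · exact Or.inr fun x hx => h.trans_lt hx
  · exact Or.inl fun x hx => h.trans_lt hx

theorem some_lt_none (hmax : ∀ z : Option X, z ≤ none) (a : X) : some a < none :=
  (hmax _).lt_of_ne (Option.some_ne_none a)

variable (hwo : WOBy (filterTop p) inferInstance)
include hwo

theorem isOpen_Ioi_filterTop (z : Option X) : (filterTop p).IsOpen (Ioi z) :=
  hwo _ (TopologicalSpace.GenerateOpen.basic _ ⟨z, Or.inr rfl⟩)

variable (hmax : ∀ z : Option X, z ≤ none)
include hmax

theorem rayTrace_mem (a : X) : rayTrace a ∈ p :=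
  isOpen_Ioi_filterTop hwo _ (some_lt_none hmax a)

theorem exists_nested_of_none_mem_closure {A : Set (Option X)} (hnA : none ∉ A)
    (hA : none ∈ @closure (Option X) (filterTop p) A) :
    ∃ F : Set (Set X), (∀ P ∈ F, P ∈ p) ∧ Nested F ∧ ⋂₀ F = ∅ ∧ #F ≤ #A := by
  let := filterTop p
  refine ⟨rayTrace '' (some ⁻¹' A), ?_, nested_image_rayTrace _, ?_,
    mk_image_le.trans (mk_preimage_of_injective _ _ (Option.some_injective X))⟩
  · rintro _ ⟨a, -, rfl⟩
    exact rayTrace_mem hwo hmax a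
  · refine eq_empty_of_forall_notMem fun x hx => ?_
    obtain ⟨_ | a, hxa, ha⟩ := mem_closure_iff.1 hA _ (isOpen_Ioi_filterTop hwo (some x))
      (some_lt_none hmax x)
    · exact hnA ha
    · exact lt_asymm hxa (hx _ ⟨a, ha, rfl⟩)

end WeaklyOrdered

theorem stmt1_general {X : Type u} (p : Filter X) (hfree : IsFree p)
    (hwo : WeaklyPOrderable (filterTop p) (none : Option X))
    (κ : Cardinal.{u})
    (hκ : κ = sInf {c : Cardinal.{u} | ∃ F : Set (Set X),
      (∀ P ∈ F, P ∈ p) ∧ Nested F ∧ ⋂₀ F = (∅ : Set X) ∧ c = Cardinal.mk ↥F}) :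
    psiNum (filterTop p) (none : Option X) ≤ κ ∧
      κ ≤ aNum (filterTop p) (none : Option X) := by
  obtain ⟨r, hr, hmax⟩ := hwo
  let := r
  have hclosure := none_mem_closure_range_some hfree.1
  obtain ⟨F, hFp, hFn, hF, -⟩ := exists_nested_of_none_mem_closure hr hmax (by simp) hclosure
  subst hκ
  constructor
  · exact le_csInf ⟨_, F, hFp, hFn, hF, rfl⟩ fun _ ⟨F, hFp, _, hF, hc⟩ =>
      hc ▸ psiNum_none_le_mk_of_sInter_eq_empty hFp hF
  · refine le_csInf ⟨_, _, by simp, hclosure, rfl⟩ fun _ ⟨A, hnA, hA, hc⟩ => hc ▸ ?_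
    obtain ⟨F, hFp, hFn, hF, hFA⟩ := exists_nested_of_none_mem_closure hr hmax hnA hA
    exact (csInf_le' (by exact ⟨F, hFp, hFn, hF, rfl⟩)).trans hFA

/-- If `X_p` is a weakly `p`-orderable filter space and
`κ = min {|𝒫| : 𝒫 nested subfamily of p with ⋂𝒫 = ∅}`, then `ψ(X_p) ≤ κ ≤ a(X_p)`. -/
theorem stmt1 {X : Type u} [Infinite X] (p : Filter X) (hfree : IsFree p)
    (hwo : WeaklyPOrderable (filterTop p) (none : Option X))
    (κ : Cardinal.{u})
    (hκ : κ = sInf {c : Cardinal.{u} | ∃ F : Set (Set X),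
      (∀ P ∈ F, P ∈ p) ∧ Nested F ∧ ⋂₀ F = (∅ : Set X) ∧ c = Cardinal.mk ↥F}) :
    psiNum (filterTop p) (none : Option X) ≤ κ ∧
      κ ≤ aNum (filterTop p) (none : Option X) :=
  stmt1_general p hfree hwo κ hκ
end

section
/- Let X_p be a filter space such that a(X_p) = ‖p‖ = κ. Then there exists a family {P_α : α < κ} ⊆ p, indexed by the ordinals below κ, such that P_α ⊊ ⋂_{β<α} P_β for every α < κ and ⋂_{α<κ} P_α = ∅. In particular, this family is nested and X_p is weakly p-orderable. -/
open Set

universe u v w y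

/-! Pick `Q ∈ p` with `|Q| = ‖p‖ = κ` (infinite, as `p` is free) and enumerate it as
`Q = {x_β : β < κ}`. Since `a(X_p) = κ`, no set of size `< κ` accumulates at `p`, so the
complement of such a set lies in `p`; in particular each tail `P_α = {x_β : α < β}` lies in `p`,
as `Q \ P_α` has size `|α + 1| < κ`. The tails strictly decrease and have empty intersection.
Ordering `X` lexicographically by index, with `p` on top, every upper ray of a point contains a
tail, hence is a neighbourhood of `p`; all other points are isolated. -/

open Cardinal Filter Topology

section FilterSpace

variable {X : Type u} {p : Filter X}

theorem IsFree.le_cofinite (hp : IsFree p) : p ≤ cofinite :=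
  le_cofinite_iff_ker.2 hp.2

theorem IsFree.infinite_of_mem (hp : IsFree p) {Q : Set X} (hQ : Q ∈ p) : Q.Infinite := by
  intro hfin
  exact hp.1 (by simpa using inter_mem hQ (hp.le_cofinite hfin.compl_mem_cofinite))

theorem exists_mem_mk_eq_fNorm (p : Filter X) : ∃ Q ∈ p, #Q = fNorm p := by
  obtain ⟨Q, hQ, hQp⟩ := csInf_mem (s := {c | ∃ P ∈ p, c = #P}) ⟨_, univ, univ_mem, rfl⟩
  exact ⟨Q, hQ, hQp.symm⟩

theorem none_mem_closure_image_some {S : Set X} (hS : Sᶜ ∉ p) :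
    (none : Option X) ∈ closure[filterTop p] (some '' S) := by
  refine (@mem_closure_iff _ (filterTop p) _ _).2 fun U hU hnone => ?_
  obtain ⟨x, hxS, hxU⟩ := ((not_eventually.1 hS).and_eventually (hU hnone)).exists
  exact ⟨some x, hxU, mem_image_of_mem _ (not_not.1 hxS)⟩

theorem compl_mem_of_mk_lt_aNum {S : Set X} (hS : #S < aNum (filterTop p) none) : Sᶜ ∈ p := by
  by_contra h
  refine hS.not_ge (csInf_le' ⟨some '' S, by simp, none_mem_closure_image_some h, ?_⟩)
  exact (mk_image_eq (Option.some_injective X)).symm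

end FilterSpace

section Tail

variable {X : Type u} {β : Type*} [LinearOrder β]

def tailSet (Q : Set X) (r : X → β) (α : β) : Set X := {x ∈ Q | α < r x}

variable {Q : Set X} {r : X → β}

theorem tailSet_antitone (Q : Set X) (r : X → β) : Antitone (tailSet Q r) :=
  fun _ _ hαβ _ hx => ⟨hx.1, hαβ.trans_lt hx.2⟩

theorem tailSet_ssubset_biInter {o α : β} (hr : SurjOn r Q (Iio o)) (hα : α < o) :
    tailSet Q r α ⊂ ⋂ γ ∈ Iio α, tailSet Q r γ := by
  refine ssubset_iff_subset_ne.2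
    ⟨fun x hx => mem_iInter₂.2 fun γ hγ => tailSet_antitone Q r hγ.le hx, fun h => ?_⟩
  obtain ⟨x, hxQ, rfl⟩ := hr hα
  have hx : x ∈ ⋂ γ ∈ Iio (r x), tailSet Q r γ := mem_iInter₂.2 fun γ hγ => ⟨hxQ, hγ⟩
  exact (h ▸ hx).2.false

theorem biInter_tailSet_eq_empty {o : β} (hr : ∀ x, r x < o) :
    ⋂ α ∈ Iio o, tailSet Q r α = ∅ :=
  eq_empty_of_forall_notMem fun x hx => (mem_iInter₂.1 hx (r x) (hr x)).2.false

end Tail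

section Ordinal

variable {X : Type u} {Q : Set X} {r : X → Ordinal.{u}}

theorem mk_diff_tailSet_lt {κ : Cardinal.{u}} (hr : InjOn r Q) (hκ : ℵ₀ ≤ κ) {α : Ordinal.{u}}
    (hα : α < κ.ord) : #(Q \ tailSet Q r α : Set X) < κ := by
  have hsub : r '' (Q \ tailSet Q r α) ⊆ Iio (Order.succ α) := by
    rintro _ ⟨x, ⟨hxQ, hx⟩, rfl⟩
    exact Order.lt_succ_iff.2 (not_lt.1 fun h => hx ⟨hxQ, h⟩)
  have hle : lift.{u + 1} #(Q \ tailSet Q r α : Set X) ≤ lift.{u + 1} (Order.succ α).card := by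
    rw [← mk_image_eq_of_injOn_lift _ _ (hr.mono sdiff_subset)]
    simpa using lift_le.{u}.2 (mk_le_mk_of_subset hsub)
  exact (lift_le.1 hle).trans_lt (lt_ord.1 ((isSuccLimit_ord hκ).succ_lt hα))

theorem tailSet_mem {p : Filter X} {κ : Cardinal.{u}} (hQ : Q ∈ p) (hr : InjOn r Q)
    (hκ : ℵ₀ ≤ κ) (hsmall : ∀ S : Set X, #S < κ → Sᶜ ∈ p) {α : Ordinal.{u}} (hα : α < κ.ord) :
    tailSet Q r α ∈ p := by
  have hsub : tailSet Q r α ⊆ Q := sep_subset _ _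
  rw [← sdiff_sdiff_cancel_left hsub]
  exact sdiff_mem hQ (hsmall _ (mk_diff_tailSet_lt hr hκ hα))

theorem exists_bijOn_Iio_ord (hQ : Q.Nonempty) :
    ∃ r : X → Ordinal.{u}, BijOn r Q (Iio (#Q).ord) ∧ ∀ x, r x < (#Q).ord := by
  classical
  obtain ⟨e⟩ : Nonempty (Q ≃ Iio (#Q).ord) := lift_mk_eq'.1 (by simp)
  have hpos : (0 : Ordinal) < (#Q).ord :=
    ord_pos.2 (pos_iff_ne_zero.2 (mk_ne_zero_iff.2 hQ.to_subtype))
  refine ⟨fun x => if h : x ∈ Q then e ⟨x, h⟩ else 0,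
    ⟨fun x hx => ?_, fun x hx y hy hxy => ?_, fun o ho => ?_⟩, fun x => ?_⟩
  · simp only [dif_pos hx]
    exact (e _).2
  · simp only [dif_pos hx, dif_pos hy] at hxy
    exact congrArg Subtype.val (e.injective (Subtype.val_injective hxy))
  · exact ⟨e.symm ⟨o, ho⟩, (e.symm _).2, by simp⟩
  · by_cases hx : x ∈ Q
    · simpa only [dif_pos hx] using mem_Iio.1 (e _).2
    · simpa only [dif_neg hx] using hpos

end Ordinal

section Orderable

variable {X : Type u} {p : Filter X}

theorem weaklyPOrderable_of_Ioi_mem [LinearOrder X] (h : ∀ x : X, Ioi x ∈ p) :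
    WeaklyPOrderable (filterTop p) (none : Option X) := by
  refine ⟨WithTop.linearOrder, fun S hS => ?_, fun z => le_top (α := WithTop X)⟩
  refine TopologicalSpace.le_def.1 (TopologicalSpace.le_generateFrom_iff_subset_isOpen.2 ?_) S hS
  rintro _ ⟨a, rfl | rfl⟩ hnone
  · exact absurd hnone (not_top_lt (α := WithTop X))
  · cases a with
    | none => exact absurd hnone (lt_irrefl (⊤ : WithTop X))
    | some x => exact mem_of_superset (h x) fun y hy => WithTop.coe_lt_coe.2 hy

theorem weaklyPOrderable_of_forall_lt_mem {β : Type*} [LinearOrder β] (f : X → β)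
    (h : ∀ x, {y | f x < f y} ∈ p) : WeaklyPOrderable (filterTop p) (none : Option X) := by
  let _ : LinearOrder X := LinearOrder.lift' (fun x => toLex (f x, embeddingToCardinal x))
    fun a b hab => embeddingToCardinal.injective (congrArg (fun t => (ofLex t).2) hab)
  exact weaklyPOrderable_of_Ioi_mem fun x => mem_of_superset (h x) fun y hy =>
    Prod.Lex.lt_iff.2 (Or.inl hy)

end Orderable

theorem stmt2_general {X : Type u} (p : Filter X) (hfree : IsFree p)
    (κ : Cardinal.{u})
    (ha : aNum (filterTop p) (none : Option X) = κ) (hn : fNorm p = κ) :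
    (∃ P : Ordinal.{u} → Set X,
      (∀ α < κ.ord, P α ∈ p) ∧
      (∀ α < κ.ord, P α ⊂ ⋂ β ∈ Set.Iio α, P β) ∧
      ((⋂ α ∈ Set.Iio κ.ord, P α) = (∅ : Set X)) ∧
      (∀ α ∈ Set.Iio κ.ord, ∀ β ∈ Set.Iio κ.ord, P α ⊆ P β ∨ P β ⊆ P α)) ∧
    WeaklyPOrderable (filterTop p) (none : Option X) := by
  obtain ⟨Q, hQp, hQκ⟩ := exists_mem_mk_eq_fNorm p
  rw [hn] at hQκ
  have hQ : Q.Infinite := hfree.infinite_of_mem hQp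
  have hκ : ℵ₀ ≤ κ := hQκ ▸ infinite_iff.1 hQ.to_subtype
  obtain ⟨r, hr, hr_lt⟩ := hQκ ▸ exists_bijOn_Iio_ord hQ.nonempty
  have hsmall (S : Set X) (hS : #S < κ) : Sᶜ ∈ p := compl_mem_of_mk_lt_aNum (ha ▸ hS)
  have hmem {α} (hα : α < κ.ord) : tailSet Q r α ∈ p := tailSet_mem hQp hr.injOn hκ hsmall hα
  refine ⟨⟨tailSet Q r, @hmem, fun α hα => tailSet_ssubset_biInter hr.surjOn hα,
    biInter_tailSet_eq_empty hr_lt, fun α _ β _ => ?_⟩, ?_⟩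
  · exact (le_total β α).imp (tailSet_antitone Q r ·) (tailSet_antitone Q r ·)
  · exact weaklyPOrderable_of_forall_lt_mem r fun x =>
      mem_of_superset (hmem (hr_lt x)) fun _ hy => hy.2

/-- If `X_p` is a filter space with `a(X_p) = ‖p‖ = κ`, then there is a family
`{P_α : α < κ} ⊆ p` with `P_α ⊊ ⋂_{β<α} P_β` for all `α < κ` and `⋂_{α<κ} P_α = ∅`.
In particular this family is nested, and `X_p` is weakly `p`-orderable. -/
theorem stmt2 {X : Type u} [Infinite X] (p : Filter X) (hfree : IsFree p)
    (κ : Cardinal.{u})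
    (ha : aNum (filterTop p) (none : Option X) = κ) (hn : fNorm p = κ) :
    (∃ P : Ordinal.{u} → Set X,
      (∀ α < κ.ord, P α ∈ p) ∧
      (∀ α < κ.ord, P α ⊂ ⋂ β ∈ Set.Iio α, P β) ∧
      ((⋂ α ∈ Set.Iio κ.ord, P α) = (∅ : Set X)) ∧
      (∀ α ∈ Set.Iio κ.ord, ∀ β ∈ Set.Iio κ.ord, P α ⊆ P β ∨ P β ⊆ P α)) ∧
    WeaklyPOrderable (filterTop p) (none : Option X) :=
  stmt2_general p hfree κ ha hn
end

section
/- If p is a free ultrafilter on an infinite set X, then every linear order ≤ on X can be extended to a linear order ⪯ on the underlying set X ∪ {p} of the filter space X_p (i.e., the restriction of ⪯ to X equals ≤) such that the order topology generated by ⪯ is coarser than the topology of X_p. -/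
/-!
The ultrafilter `p` determines a cut of `(X, ≤)`: the lower set of those `a` with
`{x | a < x} ∈ p`. Inserting `p` into this cut gives a linear order on `X ∪ {p}` extending `≤`.
A ray containing `p` then traces on `X` either `{x | a < x}` with `a` below the cut, which lies
in `p` by definition, or `{x | x < a}` with `a` above the cut: there `{x | x ≤ a} ∈ p` because
`p` is an ultrafilter, and `{x | x ≠ a} ∈ p` because `p` is free. So every ray is open in `X_p`.
-/

open Set

universe u v w y

section CutOrder

variable {X : Type*} [LinearOrder X]

/-- The `Bool` coordinate separates the extra point from `a` when `L = Iic a`, placing it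
just after `a`. -/
def cutEmbedding (L : LowerSet X) : Option X → LowerSet X ×ₗ Bool
  | some a => toLex (LowerSet.Iic a, false)
  | none => toLex (L, true)

lemma cutEmbedding_injective (L : LowerSet X) : Function.Injective (cutEmbedding L) := by
  rintro (_ | a) (_ | b) h <;> simp_all [cutEmbedding]

noncomputable def cutOrder (L : LowerSet X) : LinearOrder (Option X) :=
  LinearOrder.lift' (cutEmbedding L) (cutEmbedding_injective L)

variable (L : LowerSet X) (a b : X)

lemma cutOrder_some_le_some : (cutOrder L).le (some a) (some b) ↔ a ≤ b := by
  show toLex (LowerSet.Iic a, false) ≤ toLex (LowerSet.Iic b, false) ↔ a ≤ b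
  rw [Prod.Lex.toLex_le_toLex]
  simp [(LowerSet.Iic_strictMono X).lt_iff_lt, le_iff_lt_or_eq]

lemma cutOrder_some_lt_some : (cutOrder L).lt (some a) (some b) ↔ a < b := by
  show toLex (LowerSet.Iic a, false) < toLex (LowerSet.Iic b, false) ↔ a < b
  simp [Prod.Lex.toLex_lt_toLex, (LowerSet.Iic_strictMono X).lt_iff_lt]

lemma cutOrder_some_lt_none : (cutOrder L).lt (some a) none ↔ a ∈ L := by
  show toLex (LowerSet.Iic a, false) < toLex (L, true) ↔ a ∈ L
  simp [Prod.Lex.lt_iff, ← le_iff_lt_or_eq]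

lemma cutOrder_none_lt_some : (cutOrder L).lt none (some a) ↔ a ∉ L := by
  show toLex (L, true) < toLex (LowerSet.Iic a, false) ↔ a ∉ L
  rw [Prod.Lex.toLex_lt_toLex, lt_iff_not_ge, LowerSet.Iic_le]
  simp

end CutOrder

def Filter.cut {X : Type*} [Preorder X] (F : Filter X) : LowerSet X where
  carrier := {a | Ioi a ∈ F}
  lower' _ _ hba ha := Filter.mem_of_superset ha (Ioi_subset_Ioi hba)

lemma Filter.compl_singleton_mem_of_sInter_eq_empty {X : Type*} {F : Filter X}
    (hF : ⋂₀ {P : Set X | P ∈ F} = ∅) (a : X) : {a}ᶜ ∈ F := by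
  have ha : a ∉ ⋂₀ {P : Set X | P ∈ F} := hF ▸ notMem_empty a
  obtain ⟨P, hP, haP⟩ := not_forall₂.mp (mem_sInter.not.mp ha)
  exact Filter.mem_of_superset hP fun x hx hxa => haP (hxa ▸ hx)

lemma wOBy_of_isOpen_rays {Z : Type u} {t : TopologicalSpace Z} {r : LinearOrder Z}
    (hlt : ∀ a, t.IsOpen {z | r.lt z a}) (hgt : ∀ a, t.IsOpen {z | r.lt a z}) : WOBy t r :=
  fun _ hS => (le_generateFrom (by
    rintro _ ⟨a, rfl | rfl⟩
    exacts [hlt a, hgt a]) : t ≤ ordTop r) _ hS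

section FilterSpace

variable {X : Type u} [LinearOrder X]

lemma isOpen_filterTop_cutOrder_gt (F : Filter X) (a : Option X) :
    (filterTop F).IsOpen {z | (cutOrder F.cut).lt a z} := by
  rcases a with _ | a
  · exact fun h => absurd h (@lt_irrefl _ (cutOrder _).toPreorder none)
  · intro h
    have hpre : Option.some ⁻¹' {z | (cutOrder F.cut).lt (some a) z} = Ioi a := by
      ext x
      exact cutOrder_some_lt_some F.cut a x
    rw [hpre]
    exact (cutOrder_some_lt_none F.cut a).mp h

lemma isOpen_filterTop_cutOrder_lt (p : Ultrafilter X)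
    (hp : ⋂₀ {P : Set X | P ∈ (p : Filter X)} = ∅) (a : Option X) :
    (filterTop (p : Filter X)).IsOpen {z | (cutOrder (p : Filter X).cut).lt z a} := by
  rcases a with _ | a
  · exact fun h => absurd h (@lt_irrefl _ (cutOrder _).toPreorder none)
  · intro h
    have hpre : Option.some ⁻¹' {z | (cutOrder (p : Filter X).cut).lt z (some a)} = Iio a := by
      ext x
      exact cutOrder_some_lt_some _ x a
    rw [hpre]
    have hle : Iic a ∈ p := by
      rw [← compl_Ioi]
      exact Ultrafilter.compl_mem_iff_notMem.mpr ((cutOrder_none_lt_some _ a).mp h)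
    have hne := Filter.compl_singleton_mem_of_sInter_eq_empty hp a
    filter_upwards [hle, hne] with x hxa hxne
    exact lt_of_le_of_ne hxa hxne

end FilterSpace

theorem stmt4_general {X : Type u} (p : Ultrafilter X)
    (hfree : IsFree (p : Filter X)) (r : LinearOrder X) :
    ∃ s : LinearOrder (Option X),
      (∀ x y : X, s.le (some x) (some y) ↔ r.le x y) ∧
      WOBy (filterTop (p : Filter X)) s := by
  let _ := r
  exact ⟨cutOrder (p : Filter X).cut, cutOrder_some_le_some _,
    wOBy_of_isOpen_rays (isOpen_filterTop_cutOrder_lt p hfree.2)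
      (isOpen_filterTop_cutOrder_gt (p : Filter X))⟩

/-- If `p` is a free ultrafilter on an infinite set `X`, then every linear
order on `X` extends to a linear order on `X ∪ {p}` whose order topology is coarser than
the topology of the filter space `X_p`. -/
theorem stmt4 {X : Type u} [Infinite X] (p : Ultrafilter X)
    (hfree : IsFree (p : Filter X)) (r : LinearOrder X) :
    ∃ s : LinearOrder (Option X),
      (∀ x y : X, s.le (some x) (some y) ↔ r.le x y) ∧
      WOBy (filterTop (p : Filter X)) s :=
  stmt4_general p hfree r
end

section
/- Let X be a set and κ an infinite cardinal with κ ≤ |X|, and let p^κ = {A ⊆ X : |X \ A| < κ}. Then: (i) a(X_{p^κ}) = κ and ‖p^κ‖ = |X|; (ii) if |X| = κ, then ψ(X_{p^κ}) = cf(κ); (iii) if |X| > κ, then ψ(X_{p^κ}) = |X|. -/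
open Set

universe u v w y

/-! Open sets of `X_p` containing `none` are exactly the sets `insert none (some '' P)` with
`P ∈ p`. Hence `a(none)` is the least size of a set `B ⊆ X` with `Bᶜ ∉ p`, and `ψ(none)` is the
least size of a family `F ⊆ p` with `⋂₀ F = ∅`. For `p = p^κ` the first is `κ`. Such a family `F`
covers `X` by the complements of its members, each of size `< κ`, so
`|X| ≤ |F| · sup_{P ∈ F} |Pᶜ|`; this forces `|F| ≥ cf κ` when `|X| = κ` and `|F| ≥ |X|` when
`|X| > κ`. The bounds are attained by the final segments `[y, ∞)` of a well-order of type `κ`,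
`y` running through a cofinal set, and by the sets `X \ {x}`. -/

open Cardinal

theorem mk_le_mk_mul_iSup_mk_compl_of_sInter_eq_empty {X : Type u} {F : Set (Set X)}
    (hF : ⋂₀ F = ∅) : #X ≤ #F * ⨆ P : F, #↥((P : Set X)ᶜ) := by
  have hcover : (⋃ P : F, (P : Set X)ᶜ) = Set.univ := by
    rw [← compl_iInter, ← sInter_eq_iInter, hF, compl_empty]
  simpa [hcover] using mk_iUnion_le fun P : F ↦ (P : Set X)ᶜ

theorem exists_sInter_eq_empty_mk_le_cof (X : Type u) [Infinite X] :
    ∃ F : Set (Set X), (∀ P ∈ F, #↥(Pᶜ : Set X) < #X) ∧ ⋂₀ F = ∅ ∧ #F ≤ (#X).ord.cof := by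
  have : NoMaxOrder (#X).ord.ToType := Cardinal.noMaxOrder (aleph0_le_mk X)
  obtain ⟨e⟩ : Nonempty (X ≃ (#X).ord.ToType) := Cardinal.eq.1 (mk_ord_toType _).symm
  obtain ⟨S, hS, hSc⟩ := Order.exists_cof_eq (#X).ord.ToType
  refine ⟨(fun y ↦ e ⁻¹' Ici y) '' S, ?_, ?_, ?_⟩
  · rintro _ ⟨y, -, rfl⟩
    rw [← preimage_compl, compl_Ici, mk_preimage_of_injective_of_subset_range _ _ e.injective
      (by simp)]
    simpa using mk_Iio_lt y (by simp)
  · refine eq_empty_of_forall_notMem fun x hx ↦ ?_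
    obtain ⟨z, hz⟩ := exists_gt (e x)
    obtain ⟨y, hyS, hzy⟩ := hS z
    exact (hz.trans_le hzy).not_ge (hx _ ⟨y, hyS, rfl⟩)
  · exact mk_image_le.trans (by rw [hSc, Ordinal.cof_toType])

section FilterSpace

variable {X : Type u} {p : Filter X}

theorem none_mem_closure_filterTop_iff {A : Set (Option X)} (hA : none ∉ A) :
    none ∈ @closure _ (filterTop p) A ↔ (some ⁻¹' A)ᶜ ∉ p := by
  let := filterTop p
  rw [mem_closure_iff]
  constructor
  · intro h hAc
    obtain ⟨a, haA', haA⟩ := h Aᶜ (fun _ ↦ hAc) hA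
    exact haA' haA
  · intro hAc U hU hnU
    by_contra hUA
    exact hAc (Filter.mem_of_superset (hU hnU) fun x hxU hxA ↦ hUA ⟨some x, hxU, hxA⟩)

theorem aNum_filterTop (p : Filter X) :
    aNum (filterTop p) none = sInf {c | ∃ B : Set X, Bᶜ ∉ p ∧ c = #B} := by
  unfold aNum
  congr 1
  ext c
  constructor
  · rintro ⟨A, hA, hcl, rfl⟩
    refine ⟨some ⁻¹' A, (none_mem_closure_filterTop_iff hA).1 hcl,
      (mk_preimage_of_injective_of_subset_range _ _ (Option.some_injective X) ?_).symm⟩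
    rw [← compl_compl (range some), compl_range_some]
    exact fun a ha ha' ↦ hA (ha' ▸ ha)
  · rintro ⟨B, hB, rfl⟩
    have hnone : none ∉ some '' B := by simp
    refine ⟨some '' B, hnone, ?_, (mk_image_eq (Option.some_injective X)).symm⟩
    rwa [none_mem_closure_filterTop_iff hnone, preimage_image_eq _ (Option.some_injective X)]

theorem psiNum_filterTop (p : Filter X) :
    psiNum (filterTop p) none =
      sInf {c | ∃ F : Set (Set X), (∀ P ∈ F, P ∈ p) ∧ ⋂₀ F = ∅ ∧ c = #F} := by
  unfold psiNum
  apply csInf_eq_csInf_of_forall_exists_le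
  · rintro _ ⟨U, hU, hUnone, rfl⟩
    have hnone : ∀ V ∈ U, none ∈ V := fun V hV ↦ (hUnone.ge rfl : none ∈ ⋂₀ U) V hV
    refine ⟨_, ⟨(some ⁻¹' ·) '' U, ?_, ?_, rfl⟩, mk_image_le⟩
    · rintro _ ⟨V, hV, rfl⟩
      exact hU V hV (hnone V hV)
    · refine eq_empty_of_forall_notMem fun x hx ↦ ?_
      have : some x ∈ ⋂₀ U := fun V hV ↦ hx _ ⟨V, hV, rfl⟩
      simp [hUnone] at this
  · rintro _ ⟨F, hFp, hF, rfl⟩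
    refine ⟨_, ⟨(insert none <| some '' ·) '' F, ?_, ?_, rfl⟩, mk_image_le⟩
    · rintro _ ⟨P, hP, rfl⟩ -
      convert hFp P hP using 1
      ext
      simp
    · ext (_ | x)
      · simp
      · simpa using fun hx ↦ (hF ▸ mem_sInter.2 hx : x ∈ (∅ : Set X))

theorem aNum_filterTop_of_mem_iff {κ : Cardinal.{u}} (hκX : κ ≤ #X)
    (hp : ∀ A : Set X, A ∈ p ↔ #↥(Aᶜ) < κ) : aNum (filterTop p) none = κ := by
  rw [aNum_filterTop]
  obtain ⟨B, rfl⟩ := le_mk_iff_exists_set.1 hκX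
  refine IsLeast.csInf_eq ⟨⟨B, by simp [hp], rfl⟩, ?_⟩
  rintro _ ⟨C, hC, rfl⟩
  simpa [hp] using hC

theorem fNorm_of_mem_iff [Infinite X] {κ : Cardinal.{u}} (hκX : κ ≤ #X)
    (hp : ∀ A : Set X, A ∈ p ↔ #↥(Aᶜ) < κ) : fNorm p = #X := by
  refine IsLeast.csInf_eq ⟨⟨univ, Filter.univ_mem, mk_univ.symm⟩, ?_⟩
  rintro _ ⟨P, hP, rfl⟩
  rw [hp] at hP
  simpa using (mk_compl_of_infinite Pᶜ (hP.trans_le hκX)).ge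

theorem psiNum_filterTop_eq_of_mem_iff {κ c : Cardinal.{u}}
    (hp : ∀ A : Set X, A ∈ p ↔ #↥(Aᶜ) < κ)
    (hex : ∃ F : Set (Set X), (∀ P ∈ F, #↥(Pᶜ) < κ) ∧ ⋂₀ F = ∅ ∧ #F ≤ c)
    (hle : ∀ F : Set (Set X), (∀ P ∈ F, #↥(Pᶜ) < κ) → ⋂₀ F = ∅ → c ≤ #F) :
    psiNum (filterTop p) none = c := by
  simp_rw [psiNum_filterTop, hp]
  obtain ⟨F, hFκ, hF, hFc⟩ := hex
  refine IsLeast.csInf_eq ⟨⟨F, hFκ, hF, (hFc.antisymm (hle F hFκ hF)).symm⟩, ?_⟩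
  rintro _ ⟨G, hGκ, hG, rfl⟩
  exact hle G hGκ hG

theorem psiNum_filterTop_eq_cof {κ : Cardinal.{u}} (hκ : ℵ₀ ≤ κ) (hX : #X = κ)
    (hp : ∀ A : Set X, A ∈ p ↔ #↥(Aᶜ) < κ) : psiNum (filterTop p) none = κ.ord.cof := by
  subst hX
  have : Infinite X := infinite_iff.2 hκ
  refine psiNum_filterTop_eq_of_mem_iff hp (exists_sInter_eq_empty_mk_le_cof X) fun F hFκ hF ↦ ?_
  by_contra! hFcof
  exact (mk_le_mk_mul_iSup_mk_compl_of_sInter_eq_empty hF).not_gt <|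
    mul_lt_of_lt hκ (hFcof.trans_le (Ordinal.cof_ord_le _))
      (iSup_lt_of_lt_cof_ord hFcof fun P ↦ hFκ P P.2)

theorem psiNum_filterTop_eq_mk {κ : Cardinal.{u}} (hκ : ℵ₀ ≤ κ) (hκX : κ < #X)
    (hp : ∀ A : Set X, A ∈ p ↔ #↥(Aᶜ) < κ) : psiNum (filterTop p) none = #X := by
  refine psiNum_filterTop_eq_of_mem_iff hp ⟨range fun x ↦ {x}ᶜ, ?_, ?_, mk_range_le⟩
    fun F hFκ hF ↦ ?_
  · rintro _ ⟨x, rfl⟩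
    simpa using one_lt_aleph0.trans_le hκ
  · ext x
    simp
  · by_contra! hFX
    exact (mk_le_mk_mul_iSup_mk_compl_of_sInter_eq_empty hF).not_gt <|
      (mul_le_mul_right (ciSup_le' fun P : F ↦ (hFκ P P.2).le) _).trans_lt
        (mul_lt_of_lt (hκ.trans hκX.le) hFX hκX)

end FilterSpace

/-- For an infinite cardinal `κ ≤ |X|` and the filter
`p^κ = {A ⊆ X : |X \ A| < κ}`: (i) `a(X_{p^κ}) = κ` and `‖p^κ‖ = |X|`;
(ii) if `|X| = κ` then `ψ(X_{p^κ}) = cf(κ)`; (iii) if `|X| > κ` then `ψ(X_{p^κ}) = |X|`. -/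
theorem stmt6 {X : Type u} (κ : Cardinal.{u}) (hκ : Cardinal.aleph0 ≤ κ)
    (hκX : κ ≤ Cardinal.mk X)
    (p : Filter X) (hp : ∀ A : Set X, A ∈ p ↔ Cardinal.mk ↥(Aᶜ) < κ) :
    aNum (filterTop p) (none : Option X) = κ ∧
    fNorm p = Cardinal.mk X ∧
    (Cardinal.mk X = κ → psiNum (filterTop p) (none : Option X) = κ.ord.cof) ∧
    (κ < Cardinal.mk X → psiNum (filterTop p) (none : Option X) = Cardinal.mk X) := by
  have : Infinite X := infinite_iff.2 (hκ.trans hκX)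
  exact ⟨aNum_filterTop_of_mem_iff hκX hp, fNorm_of_mem_iff hκX hp,
    fun hX ↦ psiNum_filterTop_eq_cof hκ hX hp, fun hκX' ↦ psiNum_filterTop_eq_mk hκ hκX' hp⟩
end

section
/- Let X be a set and κ an infinite cardinal with κ ≤ |X|, and let p^κ = {A ⊆ X : |X \ A| < κ}. Then the following are equivalent: (a) the filter space X_{p^κ} is weakly p^κ-orderable; (b) X_{p^κ} admits a separately continuous selection relation; (c) |X| = κ. -/
open Set

universe u v w y

open Cardinal

/-! If `R` is a separately continuous selection relation on `X_p`, every `x` with `x ≺ p` has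
only `< κ` predecessors among the points of `X`, because the ray `{z | x ≺ z}` is a neighbourhood
of `p`. A total relation in which every point has fewer than `κ` predecessors lives on a set of
size at most `κ`: fix `κ` points; any other point lies below one of them, since otherwise all `κ`
of them would be its predecessors. The same holds for the points above `p`, so `|X| ≤ κ`.
Conversely, an initial well-order of `X` of type `κ` with `p` put on top witnesses weak
`p`-orderability, as its initial segments have size `< κ`. -/

theorem Cardinal.mk_le_of_total_of_mk_lt {α : Type u} {κ : Cardinal.{u}} (hκ : ℵ₀ ≤ κ)
    (R : α → α → Prop) (htot : ∀ a b, R a b ∨ R b a) (hsmall : ∀ a, #{b | R b a} < κ) :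
    #α ≤ κ := by
  rcases lt_or_ge #α κ with hlt | hle
  · exact hlt.le
  obtain ⟨S, hS⟩ := le_mk_iff_exists_set.1 hle
  have hcover : (Set.univ : Set α) ⊆ ⋃ s ∈ S, {b | R b s} := by
    intro a _
    by_contra ha
    simp only [mem_iUnion, mem_ofPred_eq, not_exists] at ha
    have hSa : S ⊆ {b | R b a} := fun s hs => (htot a s).resolve_left (ha s hs)
    exact (hsmall a).not_ge (hS ▸ mk_le_mk_of_subset hSa)
  calc #α = #(Set.univ : Set α) := mk_univ.symm
    _ ≤ #(⋃ s ∈ S, {b | R b s}) := mk_le_mk_of_subset hcover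
    _ ≤ #S * ⨆ s : S, #{b | R b s} := mk_biUnion_le _ _
    _ ≤ κ * κ := mul_le_mul' hS.le (ciSup_le' fun s => (hsmall s).le)
    _ = κ := mul_eq_self hκ

section SelectionRelation

variable {Z : Type u} {t : TopologicalSpace Z}

theorem woBy_iff {r : LinearOrder Z} :
    WOBy t r ↔ ∀ a, t.IsOpen {z | r.lt z a} ∧ t.IsOpen {z | r.lt a z} := by
  change t ≤ ordTop r ↔ _
  simp only [ordTop, TopologicalSpace.le_generateFrom_iff_subset_isOpen, ofPred_subset_ofPred]
  constructor
  · exact fun h a => ⟨h _ ⟨a, Or.inl rfl⟩, h _ ⟨a, Or.inr rfl⟩⟩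
  · rintro h _ ⟨a, rfl | rfl⟩
    exacts [(h a).1, (h a).2]

theorem selRel_le (r : LinearOrder Z) : SelRel r.le :=
  ⟨r.le_total, fun _ _ => r.le_antisymm _ _⟩

theorem WOBy.sepCont_le {r : LinearOrder Z} (h : WOBy t r) : SepCont t r.le := by
  let := r
  intro x
  simp only [← lt_iff_le_and_ne]
  exact woBy_iff.1 h x

theorem SelRel.flip {R : Z → Z → Prop} (h : SelRel R) : SelRel (flip R) :=
  ⟨fun x y => h.1 y x, fun x y hxy hyx => h.2 x y hyx hxy⟩

theorem SepCont.flip {R : Z → Z → Prop} (h : SepCont t R) : SepCont t (flip R) := by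
  intro x
  obtain ⟨hlower, hupper⟩ := h x
  simp only [Function.flip_def]
  exact ⟨by simpa only [ne_comm] using hupper, by simpa only [ne_comm] using hlower⟩

end SelectionRelation

section FilterSpace

variable {X : Type u} {κ : Cardinal.{u}} {p : Filter X}

theorem mk_setOf_rel_none_le (hκ : ℵ₀ ≤ κ) (hp : ∀ A ∈ p, #↥Aᶜ < κ)
    {R : Option X → Option X → Prop} (hR : SelRel R) (hc : SepCont (filterTop p) R) :
    #{x : X | R (some x) none} ≤ κ := by
  refine mk_le_of_total_of_mk_lt hκ (fun a b => R (some a) (some b)) (fun a b => hR.1 _ _) ?_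
  rintro ⟨a, ha⟩
  have hray : some ⁻¹' {z | R (some a) z ∧ some a ≠ z} ∈ p :=
    (hc (some a)).2 ⟨ha, Option.some_ne_none a⟩
  have hpred : {y : X | R (some y) (some a)} ⊆ (some ⁻¹' {z | R (some a) z ∧ some a ≠ z})ᶜ :=
    fun y hya hay => hay.2 (hR.2 _ _ hay.1 hya)
  calc _ ≤ #{y : X | R (some y) (some a)} :=
        mk_preimage_of_injective _ _ Subtype.val_injective
    _ ≤ _ := mk_le_mk_of_subset hpred
    _ < κ := hp _ hray

theorem mk_le_of_sepCont_filterTop (hκ : ℵ₀ ≤ κ) (hp : ∀ A ∈ p, #↥Aᶜ < κ)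
    {R : Option X → Option X → Prop} (hR : SelRel R) (hc : SepCont (filterTop p) R) :
    #X ≤ κ := by
  have hcover : (Set.univ : Set X) ⊆ {x | R (some x) none} ∪ {x | R none (some x)} :=
    fun x _ => hR.1 (some x) none
  calc #X = #(Set.univ : Set X) := mk_univ.symm
    _ ≤ #↥({x | R (some x) none} ∪ {x | R none (some x)}) := mk_le_mk_of_subset hcover
    _ ≤ #{x | R (some x) none} + #{x | R none (some x)} := mk_union_le _ _
    _ ≤ κ + κ := add_le_add (mk_setOf_rel_none_le hκ hp hR hc)
        (mk_setOf_rel_none_le hκ hp hR.flip hc.flip)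
    _ = κ := add_eq_self hκ

theorem weaklyPOrderable_filterTop (hX : ℵ₀ ≤ #X) (hp : ∀ A : Set X, #↥Aᶜ < #X → A ∈ p) :
    WeaklyPOrderable (filterTop p) none := by
  obtain ⟨_, _, hord⟩ := exists_ord_eq_type_lt X
  refine ⟨(inferInstance : LinearOrder (WithTop X)), woBy_iff.2 fun a => ⟨?_, ?_⟩,
    fun z => le_top (α := WithTop X) (a := z)⟩
  · exact fun hnone => absurd hnone (not_top_lt (α := WithTop X))
  · intro hnone
    cases a with
    | none => exact absurd hnone (lt_irrefl (α := WithTop X) _)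
    | some x =>
      apply hp
      have hcompl : (some ⁻¹' {z : WithTop X | (x : WithTop X) < z})ᶜ = Iic x := by
        ext y
        change ¬((x : WithTop X) < y) ↔ y ≤ x
        rw [WithTop.coe_lt_coe, not_lt]
      exact hcompl ▸ mk_Iic_lt x hord hX

end FilterSpace

/-- For an infinite cardinal `κ ≤ |X|` and the filter
`p^κ = {A ⊆ X : |X \ A| < κ}`, the following are equivalent:
(a) `X_{p^κ}` is weakly `p^κ`-orderable; (b) `X_{p^κ}` admits a separately continuous
selection relation; (c) `|X| = κ`. -/
theorem stmt7 {X : Type u} (κ : Cardinal.{u}) (hκ : Cardinal.aleph0 ≤ κ)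
    (hκX : κ ≤ Cardinal.mk X)
    (p : Filter X) (hp : ∀ A : Set X, A ∈ p ↔ Cardinal.mk ↥(Aᶜ) < κ) :
    (WeaklyPOrderable (filterTop p) (none : Option X) ↔ Cardinal.mk X = κ) ∧
    ((∃ R : Option X → Option X → Prop, SelRel R ∧ SepCont (filterTop p) R) ↔
      Cardinal.mk X = κ) := by
  have hca : Cardinal.mk X = κ → WeaklyPOrderable (filterTop p) (none : Option X) := by
    rintro rfl
    exact weaklyPOrderable_filterTop hκ fun A => (hp A).2
  have hab : WeaklyPOrderable (filterTop p) (none : Option X) →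
      ∃ R : Option X → Option X → Prop, SelRel R ∧ SepCont (filterTop p) R :=
    fun ⟨r, hr, _⟩ => ⟨r.le, selRel_le r, hr.sepCont_le⟩
  have hbc : (∃ R : Option X → Option X → Prop, SelRel R ∧ SepCont (filterTop p) R) →
      Cardinal.mk X = κ :=
    fun ⟨_, hR, hc⟩ => (mk_le_of_sepCont_filterTop hκ (fun A => (hp A).1) hR hc).antisymm hκX
  exact ⟨⟨hbc ∘ hab, hca⟩, ⟨hbc, hab ∘ hca⟩⟩
end

section
/- Let X be a set and κ an infinite cardinal with κ ≤ |X|, and let p^κ = {A ⊆ X : |X \ A| < κ}. Then the following are equivalent: (a) the filter space X_{p^κ} is p^κ-orderable; (b) X_{p^κ} is orderable; (c) |X| = κ and κ is a regular cardinal. -/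
open Set

universe u v w y

/-!
In an orderable filter space, each open ray `(a, →)` with `a < p` is a neighbourhood of `p`, so
fewer than `κ` points lie below `a`; and a set of fewer than `κ` points below `p` has open
complement, hence is bounded strictly below `p`. The first fact gives `|(←, p)| ≤ κ`: a subset of
size `κ` has a down-closure of size `κ`, which misses a point of any larger segment, and that point
bounds the subset. Both facts together give regularity of `κ` when `|(←, p)| = κ`: fewer than `κ`
initial segments of a `κ`-sized subset, each bounded below `p`, would all lie below one point.
The same holds above `p`, and `X` is the union of the two sides.

Conversely, for regular `κ = |X|` transport to `X` the order `ω` (if `κ = ℵ₀`) or `κ ×ₗ ℤ`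
(if `κ > ℵ₀`): its points have immediate neighbours and its bounded sets are exactly those of
size `< κ`, so adding `p` as a top element gives exactly the filter space topology.
-/

open Cardinal Topology

section BelowPoint

variable {α : Type u} [LinearOrder α] {κ : Cardinal.{u}} {t : α}

theorem mk_Iio_le_of_forall_mk_Iic_lt (hκ : ℵ₀ ≤ κ) (h : ∀ a < t, #(Iic a) < κ) :
    #(Iio t) ≤ κ := by
  by_contra! hlt
  obtain ⟨s, hst, hs⟩ := le_mk_iff_exists_subset.1 hlt.le
  have hunion : #(⋃ x ∈ s, Iic x) ≤ κ := by
    refine (mk_biUnion_le _ _).trans ?_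
    rw [hs]
    calc κ * ⨆ x : s, #(Iic x.1) ≤ κ * κ := by
          gcongr; exact ciSup_le' fun x => (h x (hst x.2)).le
      _ = κ := mul_eq_self hκ
  obtain ⟨a, hat, ha⟩ : (Iio t \ ⋃ x ∈ s, Iic x).Nonempty := by
    refine nonempty_of_not_subset fun hsub => ?_
    exact (hlt.trans_le ((mk_le_mk_of_subset hsub).trans hunion)).false
  have hsa : s ⊆ Iic a := fun x hx => (not_le.1 fun hax => ha (mem_biUnion hx hax)).le
  exact (h a hat).not_ge (hs ▸ mk_le_mk_of_subset hsa)

theorem mk_Iic_toType_ord_lt (hκ : ℵ₀ ≤ κ) (i : κ.ord.ToType) : #(Iic i) < κ := by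
  simpa using mk_Iic_lt i (by simp) (by simpa using hκ)

theorem cof_ord_eq_of_forall_mk_Iic_lt (hκ : ℵ₀ ≤ κ) (hκt : κ ≤ #(Iio t))
    (h : ∀ a < t, #(Iic a) < κ) (hbdd : ∀ s ⊆ Iio t, #s < κ → ∃ a < t, s ⊆ Iic a) :
    κ.ord.cof = κ := by
  refine (Ordinal.cof_ord_le κ).antisymm ?_
  rw [← Ordinal.cof_toType, Order.le_cof_iff]
  intro C hC
  by_contra! hCκ
  obtain ⟨g⟩ := (le_def κ.ord.ToType (Iio t)).1 (by rwa [mk_ord_toType])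
  have hgt (i) : (g i : α) < t := (g i).2
  choose! b hbt hb using fun c => hbdd (Subtype.val ∘ g '' Iic c)
    (image_subset_iff.2 fun i _ => hgt i) (mk_image_le.trans_lt (mk_Iic_toType_ord_lt hκ c))
  obtain ⟨d, hdt, hd⟩ := hbdd (b '' C) (image_subset_iff.2 fun c _ => hbt c)
    (mk_image_le.trans_lt hCκ)
  have hgd : range (Subtype.val ∘ g) ⊆ Iic d := by
    rintro _ ⟨i, rfl⟩
    obtain ⟨c, hc, hic⟩ := hC i
    exact (hb c ⟨i, hic, rfl⟩).trans (hd ⟨c, hc, rfl⟩)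
  have hinj : Function.Injective (Subtype.val ∘ g) := Subtype.val_injective.comp g.injective
  refine (h d hdt).not_ge ?_
  rw [← mk_ord_toType κ, ← mk_range_eq _ hinj]
  exact mk_le_mk_of_subset hgd

end BelowPoint

section OrderTopology

variable {α : Type u} [LinearOrder α] [TopologicalSpace α] [OrderTopology α]
  {κ : Cardinal.{u}} {t : α}

theorem mk_Iic_lt_of_isOpen_iff (hopen : ∀ U : Set α, t ∈ U → (IsOpen U ↔ #↥Uᶜ < κ))
    {a : α} (ha : a < t) : #(Iic a) < κ := by
  simpa using (hopen (Ioi a) ha).1 isOpen_Ioi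

theorem exists_lt_subset_Iic_of_isOpen_iff
    (hopen : ∀ U : Set α, t ∈ U → (IsOpen U ↔ #↥Uᶜ < κ)) {s : Set α} (hs : s ⊆ Iio t)
    (hsκ : #s < κ) (hne : (Iio t).Nonempty) : ∃ a < t, s ⊆ Iic a := by
  have hts : t ∉ s := fun h => lt_irrefl t (hs h)
  have hnhds : sᶜ ∈ 𝓝 t := ((hopen sᶜ hts).2 (by rwa [compl_compl])).mem_nhds hts
  obtain ⟨a, hat, hsub⟩ := exists_Ioc_subset_of_mem_nhds hnhds hne
  exact ⟨a, hat, fun x hx => not_lt.1 fun hax => hsub ⟨hax, (hs hx).le⟩ hx⟩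

theorem mk_Iio_le_and_cof_ord_eq_of_isOpen_iff (hκ : ℵ₀ ≤ κ)
    (hopen : ∀ U : Set α, t ∈ U → (IsOpen U ↔ #↥Uᶜ < κ)) :
    #(Iio t) ≤ κ ∧ (κ ≤ #(Iio t) → κ.ord.cof = κ) := by
  have hIic (a) (ha : a < t) := mk_Iic_lt_of_isOpen_iff hopen ha
  refine ⟨mk_Iio_le_of_forall_mk_Iic_lt hκ hIic, fun hκt => ?_⟩
  have hne : (Iio t).Nonempty :=
    nonempty_coe_sort.1 (mk_ne_zero_iff.1 (aleph0_pos.trans_le (hκ.trans hκt)).ne')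
  exact cof_ord_eq_of_forall_mk_Iic_lt hκ hκt hIic
    fun s hs hsκ => exists_lt_subset_Iic_of_isOpen_iff hopen hs hsκ hne

end OrderTopology

theorem ordTop_eq_preorder_topology {Z : Type u} (r : LinearOrder Z) :
    ordTop r = @Preorder.topology Z r.toPreorder := by
  simp only [ordTop, Preorder.topology, Ioi, Iio, or_comm]

section FilterSpace

variable {X : Type u} {p : Filter X} {κ : Cardinal.{u}}

theorem filterTop_isOpen_of_none_notMem {U : Set (Option X)} (hU : none ∉ U) :
    (filterTop p).IsOpen U :=
  fun h => absurd h hU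

theorem filterTop_isOpen_iff_mk_compl_lt (hp : ∀ A : Set X, A ∈ p ↔ #↥Aᶜ < κ)
    {U : Set (Option X)} (hU : none ∈ U) : (filterTop p).IsOpen U ↔ #↥Uᶜ < κ := by
  have hrange : Uᶜ ⊆ range some := fun z hz => by
    cases z with
    | none => exact absurd hU hz
    | some x => exact mem_range_self x
  change (none ∈ U → _) ↔ _
  rw [hp, ← preimage_compl,
    mk_preimage_of_injective_of_subset_range _ _ (Option.some_injective X) hrange]
  exact ⟨fun h => h hU, fun h _ => h⟩

end FilterSpace

theorem mk_eq_and_cof_ord_eq_of_orderable {X : Type u} {κ : Cardinal.{u}} (hκ : ℵ₀ ≤ κ)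
    (hκX : κ ≤ #X) {p : Filter X} (hp : ∀ A : Set X, A ∈ p ↔ #↥Aᶜ < κ)
    (h : Orderable (filterTop p)) : #X = κ ∧ κ.ord.cof = κ := by
  obtain ⟨r, hr⟩ := h
  let := r
  let : TopologicalSpace (Option X) := filterTop p
  have : OrderTopology (Option X) := ⟨hr.symm.trans (ordTop_eq_preorder_topology r)⟩
  have hopen (U : Set (Option X)) (hU : none ∈ U) : IsOpen U ↔ #↥Uᶜ < κ :=
    filterTop_isOpen_iff_mk_compl_lt hp hU
  obtain ⟨hlo, hlo_cof⟩ := mk_Iio_le_and_cof_ord_eq_of_isOpen_iff hκ hopen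
  obtain ⟨hhi, hhi_cof⟩ :=
    mk_Iio_le_and_cof_ord_eq_of_isOpen_iff (α := (Option X)ᵒᵈ) hκ hopen
  have hX : #X ≤ #(Iio (none : Option X)) + #(Ioi (none : Option X)) := by
    rw [← mk_range_eq _ (Option.some_injective X)]
    refine (mk_le_mk_of_subset fun z hz => ?_).trans (mk_union_le _ _)
    rw [Iio_union_Ioi]
    rintro rfl
    simp at hz
  have hXκ : #X = κ := le_antisymm (hX.trans ((add_le_add hlo hhi).trans (add_eq_self hκ).le)) hκX
  refine ⟨hXκ, ?_⟩
  by_cases hκlo : κ ≤ #(Iio (none : Option X))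
  · exact hlo_cof hκlo
  · refine hhi_cof (not_lt.1 fun hκhi => ?_)
    exact (hκX.trans hX).not_gt (add_lt_of_lt hκ (not_le.1 hκlo) hκhi)

structure IsDiscreteKappaLine (κ : Cardinal.{u}) (α : Type u) [LinearOrder α] : Prop where
  exists_covBy : ∀ x : α, ∃ y, x ⋖ y
  exists_covBy_of_not_isMin : ∀ x : α, ¬IsMin x → ∃ w, w ⋖ x
  bddAbove_iff : ∀ s : Set α, BddAbove s ↔ #s < κ

namespace IsDiscreteKappaLine

variable {κ : Cardinal.{u}}

theorem of_orderIso {α β : Type u} [LinearOrder α] [LinearOrder β] (f : α ≃o β)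
    (h : IsDiscreteKappaLine κ β) : IsDiscreteKappaLine κ α where
  exists_covBy x := by
    obtain ⟨y, hy⟩ := h.exists_covBy (f x)
    exact ⟨f.symm y, by rwa [← apply_covBy_apply_iff f, f.apply_symm_apply]⟩
  exists_covBy_of_not_isMin x hx := by
    obtain ⟨w, hw⟩ := h.exists_covBy_of_not_isMin (f x) (by rwa [f.isMin_apply])
    exact ⟨f.symm w, by rwa [← apply_covBy_apply_iff f, f.apply_symm_apply]⟩
  bddAbove_iff s := by
    rw [← f.bddAbove_image, h.bddAbove_iff, mk_image_eq f.injective]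

theorem uliftNat : IsDiscreteKappaLine ℵ₀ (ULift.{u} ℕ) where
  exists_covBy x :=
    ⟨⟨x.down + 1⟩, (apply_covBy_apply_iff (ULift.orderIso.{u} (α := ℕ))).1 (Order.covBy_add_one _)⟩
  exists_covBy_of_not_isMin x hx := by
    have hx0 : x.down ≠ 0 := fun h0 => hx fun y _ => by simp [← ULift.down_le, h0]
    exact ⟨⟨x.down - 1⟩, (apply_covBy_apply_iff (ULift.orderIso.{u} (α := ℕ))).1
      (Nat.covBy_iff_add_one_eq.2 (Nat.sub_add_cancel (Nat.pos_of_ne_zero hx0)))⟩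
  bddAbove_iff s := by
    rw [lt_aleph0_iff_set_finite]
    refine ⟨fun ⟨b, hb⟩ => ?_, Set.Finite.bddAbove⟩
    exact ((finite_Iic b.down).preimage ULift.down_injective.injOn).subset hb

theorem lex_int (hκ : ℵ₀ < κ) (hreg : κ.ord.cof = κ) :
    IsDiscreteKappaLine κ (κ.ord.ToType ×ₗ ℤ) where
  exists_covBy y :=
    ⟨toLex ((ofLex y).1, (ofLex y).2 + 1),
      Prod.Lex.toLex_covBy_toLex_iff.2 (Or.inl ⟨rfl, Order.covBy_add_one _⟩)⟩
  exists_covBy_of_not_isMin y _ :=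
    ⟨toLex ((ofLex y).1, (ofLex y).2 - 1),
      Prod.Lex.toLex_covBy_toLex_iff.2 (Or.inl ⟨rfl, Order.sub_one_covBy _⟩)⟩
  bddAbove_iff s := by
    constructor
    · rintro ⟨b, hb⟩
      let f (z : s) : Iic (ofLex b).1 × ℤ :=
        (⟨(ofLex z.1).1, Prod.Lex.monotone_fst_ofLex (hb z.2)⟩, (ofLex z.1).2)
      have hf : Function.Injective f := fun z w hzw =>
        Subtype.ext (Prod.ext (congrArg (·.1.1) hzw) (congrArg (·.2) hzw))
      refine (mk_le_of_injective hf).trans_lt ?_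
      rw [mk_prod, lift_uzero, mk_int, lift_aleph0]
      exact mul_lt_of_lt hκ.le (mk_Iic_toType_ord_lt hκ.le _) hκ
    · intro hs
      obtain ⟨a, ha⟩ := not_isCofinal_iff.1 fun (hcof : IsCofinal ((ofLex · |>.1) '' s)) =>
        (Order.cof_le hcof).not_gt (by
          rw [Ordinal.cof_toType, hreg]; exact mk_image_le.trans_lt hs)
      refine ⟨toLex (a, 0), fun z hz => ?_⟩
      exact (Prod.Lex.toLex_lt_toLex.2 (Or.inl (ha _ (mem_image_of_mem _ hz)))).le

theorem exists_mk_eq (hκ : ℵ₀ ≤ κ)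
    (hreg : κ.ord.cof = κ) :
    ∃ (Y : Type u) (_ : LinearOrder Y), IsDiscreteKappaLine κ Y ∧ #Y = κ := by
  rcases hκ.eq_or_lt with rfl | hκ
  · exact ⟨ULift ℕ, inferInstance, .uliftNat, by simp⟩
  · refine ⟨κ.ord.ToType ×ₗ ℤ, inferInstance, .lex_int hκ hreg, ?_⟩
    change #(κ.ord.ToType × ℤ) = κ
    rw [mk_prod, lift_uzero, mk_int, lift_aleph0, mk_ord_toType, mul_aleph0_eq hκ.le]

theorem exists_linearOrder {X : Type u} (hκ : ℵ₀ ≤ κ)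
    (hreg : κ.ord.cof = κ) (hX : #X = κ) : ∃ _ : LinearOrder X, IsDiscreteKappaLine κ X := by
  obtain ⟨Y, _, hY, hYκ⟩ := exists_mk_eq hκ hreg
  obtain ⟨e⟩ := Cardinal.eq.1 (hX.trans hYκ.symm)
  let := LinearOrder.lift' e e.injective
  exact ⟨_, hY.of_orderIso ⟨e, Iff.rfl⟩⟩

theorem isOpen_singleton_coe {X : Type u} [LinearOrder X]
    [TopologicalSpace (WithTop X)] [OrderTopology (WithTop X)]
    (h : IsDiscreteKappaLine κ X) (x : X) : IsOpen {(x : WithTop X)} := by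
  obtain ⟨y, hy⟩ := h.exists_covBy x
  have hIci : IsOpen (Ici (x : WithTop X)) := by
    by_cases hx : IsMin x
    · convert isOpen_univ
      refine eq_univ_of_forall fun z => ?_
      induction z using WithTop.recTopCoe with
      | top => exact mem_Ici.2 le_top
      | coe z => exact WithTop.coe_le_coe.2 ((le_total x z).elim id (@hx z))
    · obtain ⟨w, hw⟩ := h.exists_covBy_of_not_isMin x hx
      rw [← (WithTop.coe_covBy_coe.2 hw).Ioi_eq]
      exact isOpen_Ioi
  rw [← Icc_self, ← Iic_inter_Ici, ← (WithTop.coe_covBy_coe.2 hy).Iio_eq]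
  exact isOpen_Iio.inter hIci

theorem preorder_topology_withTop_eq_filterTop {X : Type u} [LinearOrder X]
    (h : IsDiscreteKappaLine κ X) {p : Filter X}
    (hp : ∀ A : Set X, A ∈ p ↔ #↥Aᶜ < κ) : Preorder.topology (WithTop X) = filterTop p := by
  have hmem (A : Set X) : A ∈ p ↔ BddAbove Aᶜ := by rw [hp, h.bddAbove_iff]
  let := Preorder.topology (WithTop X)
  have : OrderTopology (WithTop X) := ⟨rfl⟩
  refine le_antisymm (fun U hU => ?_) (le_generateFrom ?_)
  · rw [isOpen_iff_forall_mem_open]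
    intro z hz
    induction z using WithTop.recTopCoe with
    | top =>
      obtain ⟨b, hb⟩ := (hmem _).1 (hU hz)
      refine ⟨Ioi (b : WithTop X), fun z hbz => ?_, isOpen_Ioi, WithTop.coe_lt_top b⟩
      induction z using WithTop.recTopCoe with
      | top => exact hz
      | coe z => exact not_not.1 fun hzU => (WithTop.coe_lt_coe.1 hbz).not_ge (hb hzU)
    | coe x => exact ⟨{(x : WithTop X)}, singleton_subset_iff.2 hz, h.isOpen_singleton_coe x, rfl⟩
  · rintro _ ⟨a, rfl | rfl⟩
    · induction a using WithTop.recTopCoe with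
      | top => exact filterTop_isOpen_of_none_notMem (lt_irrefl (⊤ : WithTop X))
      | coe x => exact fun _ => (hmem _).2 ⟨x, fun y hy => not_lt.1 (hy ∘ WithTop.coe_lt_coe.2)⟩
    · exact filterTop_isOpen_of_none_notMem (not_top_lt (α := WithTop X))

end IsDiscreteKappaLine

theorem pOrderable_filterTop_of_mk_eq {X : Type u} {κ : Cardinal.{u}} (hκ : ℵ₀ ≤ κ)
    (hX : #X = κ) (hreg : κ.ord.cof = κ) {p : Filter X}
    (hp : ∀ A : Set X, A ∈ p ↔ #↥Aᶜ < κ) : POrderable (filterTop p) (none : Option X) := by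
  obtain ⟨_, h⟩ := IsDiscreteKappaLine.exists_linearOrder hκ hreg hX
  refine ⟨inferInstanceAs (LinearOrder (WithTop X)), ?_, fun z => @le_top (WithTop X) _ _ z⟩
  rw [ordTop_eq_preorder_topology]
  exact h.preorder_topology_withTop_eq_filterTop hp

/-- For an infinite cardinal `κ ≤ |X|` and the filter
`p^κ = {A ⊆ X : |X \ A| < κ}`, the following are equivalent:
(a) `X_{p^κ}` is `p^κ`-orderable; (b) `X_{p^κ}` is orderable;
(c) `|X| = κ` and `κ` is regular. -/
theorem stmt8 {X : Type u} (κ : Cardinal.{u}) (hκ : Cardinal.aleph0 ≤ κ)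
    (hκX : κ ≤ Cardinal.mk X)
    (p : Filter X) (hp : ∀ A : Set X, A ∈ p ↔ Cardinal.mk ↥(Aᶜ) < κ) :
    (POrderable (filterTop p) (none : Option X) ↔ (Cardinal.mk X = κ ∧ κ.ord.cof = κ)) ∧
    (Orderable (filterTop p) ↔ (Cardinal.mk X = κ ∧ κ.ord.cof = κ)) := by
  have hnec : Orderable (filterTop p) → #X = κ ∧ κ.ord.cof = κ :=
    mk_eq_and_cof_ord_eq_of_orderable hκ hκX hp
  have hsuff : #X = κ ∧ κ.ord.cof = κ → POrderable (filterTop p) none :=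
    fun h => pOrderable_filterTop_of_mk_eq hκ h.1 h.2 hp
  have hPO : POrderable (filterTop p) none → Orderable (filterTop p) :=
    fun ⟨r, hr, _⟩ => ⟨r, hr⟩
  exact ⟨⟨hnec ∘ hPO, hsuff⟩, ⟨hnec, hPO ∘ hsuff⟩⟩
end

section
/- Let κ, λ, μ and ν be infinite cardinals such that κ is regular and κ ≤ cf(λ) ≤ λ ≤ μ ≤ ν. Then there exist a set Z with |Z| = ν and a free filter p on Z such that the filter space Z_p is weakly p-orderable, ψ(Z_p) = κ, a(Z_p) = λ and ‖p‖ = μ. -/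
/-!
Take `K = κ.ord.ToType` and `M = μ.ord.ToType`, and on `K × M` the product of the tail filter of
`K` with the filter of sets whose complement has fewer than `λ` points. Because `κ` is regular and
`κ ≤ cf λ`, this filter is `κ`-complete, while the `κ` tails `{k > a} × M` have empty
intersection: hence `ψ = κ`. A set meets every member exactly when its projection to `M` has at
least `λ` points, so `a = λ`; every member contains a copy of a co-small subset of `M`, so
`‖p‖ = μ`. In the lexicographic order on `K × M` every final segment belongs to the filter, which
is weak `p`-orderability with `p` on top; a summand of size `ν` placed below brings `|Z|` to `ν`.
-/

open Set

universe u v w y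

open Cardinal Filter Topology

namespace FilterSpace

variable {X : Type u} {p : Filter X}

lemma preimage_some_insert_none (P : Set X) : some ⁻¹' insert none (some '' P) = P := by
  ext x; simp

lemma isOpen_insert_none_image_some {P : Set X} (hP : P ∈ p) :
    (filterTop p).IsOpen (insert none (some '' P)) := fun _ => by
  rwa [preimage_some_insert_none]

lemma none_mem_closure_image_some_iff {A : Set X} :
    none ∈ closure[filterTop p] (some '' A) ↔ ∃ᶠ x in p, x ∈ A := by
  let _ := filterTop p
  rw [mem_closure_iff]
  constructor
  · intro h hA
    obtain ⟨_, hU, x, hx, rfl⟩ := h _ (isOpen_insert_none_image_some hA) (Set.mem_insert _ _)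
    have hxU : x ∈ some ⁻¹' insert none (some '' {x | x ∉ A}) := hU
    rw [preimage_some_insert_none] at hxU
    exact hxU hx
  · intro h U hU hnone
    obtain ⟨x, hxU, hxA⟩ := (h.and_eventually (hU hnone)).exists
    exact ⟨some x, hxA, x, hxU, rfl⟩

lemma isFree_of_iInter_eq_empty [p.NeBot] {ι : Sort*} {s : ι → Set X} (hs : ∀ i, s i ∈ p)
    (h : ⋂ i, s i = ∅) : IsFree p :=
  ⟨p.empty_notMem, Set.subset_empty_iff.mp <| h ▸
    Set.subset_iInter fun i => Set.sInter_subset_of_mem (hs i)⟩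

lemma weaklyPOrderable_filterTop [LinearOrder X] (h : ∀ x : X, Set.Ioi x ∈ p) :
    WeaklyPOrderable (filterTop p) none := by
  let r : LinearOrder (Option X) := inferInstanceAs (LinearOrder (WithTop X))
  refine ⟨r, fun S hS => ?_, fun z => @le_top (WithTop X) _ _ z⟩
  refine (TopologicalSpace.le_generateFrom_iff_subset_isOpen.mpr ?_) S hS
  rintro _ ⟨a, rfl | rfl⟩ hnone
  · exact absurd hnone (not_top_lt : ¬ (⊤ : WithTop X) < a)
  · cases a with
    | none => exact absurd hnone (lt_irrefl (⊤ : WithTop X))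
    | some x => exact mem_of_superset (h x) fun y hy => WithTop.coe_lt_coe.mpr hy

lemma psiNum_filterTop_eq {κ : Cardinal.{u}} [p.NeBot] [CardinalInterFilter p κ] {ι : Type u}
    {s : ι → Set X} (hs : ∀ i, s i ∈ p) (h : ⋂ i, s i = ∅) (hι : #ι ≤ κ) :
    psiNum (filterTop p) none = κ := by
  have hmem : #(Set.range fun i => insert none (some '' s i)) ∈
      {c | ∃ Us : Set (Set (Option X)),
        (∀ V ∈ Us, (filterTop p).IsOpen V) ∧ ⋂₀ Us = {none} ∧ c = #Us} := by
    refine ⟨_, Set.forall_mem_range.mpr fun i => isOpen_insert_none_image_some (hs i), ?_, rfl⟩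
    ext (_ | x)
    · simp
    · simpa [Set.preimage_image_eq _ (Option.some_injective X)] using Set.ext_iff.mp h x
  refine le_antisymm ((csInf_le' hmem).trans (mk_range_le.trans hι)) (le_csInf ⟨_, hmem⟩ ?_)
  rintro _ ⟨Us, hopen, hUs, rfl⟩
  by_contra! hlt
  have hnone : ∀ U ∈ Us, none ∈ U := fun U hU => (hUs ▸ rfl : none ∈ ⋂₀ Us) U hU
  obtain ⟨x, hx⟩ :=
    ((eventually_cardinal_ball hlt).mpr fun U hU => hopen U hU (hnone U hU)).exists
  exact Option.some_ne_none x (hUs ▸ Set.mem_sInter.mpr hx : some x ∈ ({none} : Set _))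

lemma aNum_filterTop_eq {lam : Cardinal.{u}} {A : Set X} (hA : ∃ᶠ x in p, x ∈ A)
    (hAlam : #A ≤ lam) (hsmall : ∀ B : Set X, #B < lam → Bᶜ ∈ p) :
    aNum (filterTop p) none = lam := by
  have hmem : #(some '' A) ∈ {c | ∃ A' : Set (Option X),
      none ∉ A' ∧ none ∈ closure[filterTop p] A' ∧ c = #A'} :=
    ⟨_, by simp, none_mem_closure_image_some_iff.mpr hA, rfl⟩
  refine le_antisymm ((csInf_le' hmem).trans ?_) (le_csInf ⟨_, hmem⟩ ?_)
  · rwa [mk_image_eq (Option.some_injective X)]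
  rintro _ ⟨A', hnone, hcl, rfl⟩
  by_contra! hlt
  have hA' : some '' (some ⁻¹' A') = A' :=
    Set.image_preimage_eq_of_subset fun z hz =>
      Option.ne_none_iff_exists.mp (ne_of_mem_of_not_mem hz hnone)
  rw [← hA', none_mem_closure_image_some_iff] at hcl
  exact hcl (hsmall _ ((mk_preimage_of_injective _ _ (Option.some_injective X)).trans_lt hlt))

end FilterSpace

namespace Filter

/-- The sets whose complement has fewer than `lam` elements; unlike `Filter.cocardinal`,
`lam` need not be regular. -/
def coSmall (α : Type u) {lam : Cardinal.{u}} (hlam : ℵ₀ ≤ lam) : Filter α :=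
  comk (fun s => #s < lam) (by simpa using aleph0_pos.trans_le hlam)
    (fun _ ht _ hst => (mk_le_mk_of_subset hst).trans_lt ht)
    (fun _ hs _ ht => (mk_union_le _ _).trans_lt (add_lt_of_lt hlam hs ht))

variable {α β : Type u}

@[simp]
lemma mem_coSmall {lam : Cardinal.{u}} {hlam : ℵ₀ ≤ lam} {s : Set α} :
    s ∈ coSmall α hlam ↔ #(sᶜ : Set α) < lam :=
  Iff.rfl

instance cardinalInterFilter_coSmall {lam : Cardinal.{u}} (hlam : ℵ₀ ≤ lam) :
    CardinalInterFilter (coSmall α hlam) lam.ord.cof where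
  cardinal_sInter_mem S hS hSs := by
    have hS' : #(compl '' S) < lam.ord.cof := mk_image_le.trans_lt hS
    grw [mem_coSmall, Set.compl_sInter, mk_sUnion_le]
    refine mul_lt_of_lt hlam (hS'.trans_le (Ordinal.cof_ord_le lam)) ?_
    refine iSup_lt_of_lt_cof_ord hS' fun u => ?_
    obtain ⟨_, t, ht, rfl⟩ := u
    simpa using hSs t ht

lemma neBot_coSmall {lam : Cardinal.{u}} {hlam : ℵ₀ ≤ lam} (h : lam ≤ #α) :
    (coSmall α hlam).NeBot :=
  ⟨fun hbot => (mem_coSmall.mp (empty_mem_iff_bot.mpr hbot)).not_ge (by simpa using h)⟩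

lemma mk_eq_of_mem_coSmall {lam : Cardinal.{u}} {hlam : ℵ₀ ≤ lam} {s : Set α}
    (hs : s ∈ coSmall α hlam) (h : lam ≤ #α) : #s = #α := by
  have : Infinite α := infinite_iff.mpr (hlam.trans h)
  simpa using mk_compl_of_infinite sᶜ (hs.trans_le h)

instance cardinalInterFilter_atTop [LinearOrder α] :
    CardinalInterFilter (atTop : Filter α) (Order.cof α) where
  cardinal_sInter_mem S hS hSs := by
    have : Nonempty α := Order.cof_ne_zero_iff.mp (ne_bot_of_gt hS)
    choose a ha using fun s : S => mem_atTop_sets.mp (hSs s s.2)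
    obtain ⟨b, hb⟩ :=
      not_isCofinal_iff.mp fun h => (Order.cof_le h).not_gt (mk_range_le.trans_lt hS)
    exact mem_atTop_sets.mpr ⟨b, fun x hx s hs =>
      ha ⟨s, hs⟩ x ((hb _ (Set.mem_range_self _)).le.trans hx)⟩

instance cardinalInterFilter_prod {c : Cardinal.{u}} (l₁ : Filter α) (l₂ : Filter β)
    [CardinalInterFilter l₁ c] [CardinalInterFilter l₂ c] :
    CardinalInterFilter (l₁ ×ˢ l₂) c :=
  inferInstanceAs (CardinalInterFilter (l₁.comap Prod.fst ⊓ l₂.comap Prod.snd) c)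

end Filter

namespace FilterSpace

section TailFilter

variable {K M N : Type u}

def lexInr (x : K × M) : N ⊕ₗ (K ×ₗ M) := toLex (Sum.inr (toLex x))

lemma lexInr_injective : Function.Injective (lexInr : K × M → N ⊕ₗ (K ×ₗ M)) :=
  fun _ _ h => toLex.injective (Sum.inr_injective (toLex.injective h))

/-- The filter generated by the sets `{(k, m) | a < k ∧ m ∉ S}` with `#S < lam`, carried to the
top summand of `N ⊕ₗ (K ×ₗ M)`; the summand `N` only pads the space to the required size. -/
def tailFilter (K M N : Type u) [Preorder K] {lam : Cardinal.{u}} (hlam : ℵ₀ ≤ lam) :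
    Filter (N ⊕ₗ (K ×ₗ M)) :=
  map lexInr (atTop ×ˢ coSmall M hlam)

variable [LinearOrder K] {lam : Cardinal.{u}} {hlam : ℵ₀ ≤ lam}

lemma Ioi_mem_tailFilter [LinearOrder M] [LinearOrder N] [NoMaxOrder K] (z : N ⊕ₗ (K ×ₗ M)) :
    Set.Ioi z ∈ tailFilter K M N hlam := by
  rw [tailFilter, mem_map]
  obtain w | ⟨k, m⟩ := z
  · exact univ_mem' fun x => Sum.Lex.inl_lt_inr (β := K ×ₗ M) w (toLex x)
  · refine mem_of_superset (prod_mem_prod (Ioi_mem_atTop k) univ_mem) fun x hx => ?_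
    exact Sum.Lex.inr_lt_inr_iff.mpr (Prod.Lex.toLex_lt_toLex.mpr (Or.inl hx.1))

lemma image_Ioi_prod_univ_mem_tailFilter [NoMaxOrder K] (a : K) :
    lexInr '' (Set.Ioi a ×ˢ Set.univ) ∈ tailFilter K M N hlam :=
  image_mem_map (prod_mem_prod (Ioi_mem_atTop a) univ_mem)

lemma iInter_image_Ioi_prod_univ_eq_empty [Nonempty K] {C : Set K} (hC : IsCofinal C) :
    ⋂ c : C, (lexInr '' (Set.Ioi c.1 ×ˢ Set.univ) : Set (N ⊕ₗ (K ×ₗ M))) = ∅ := by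
  refine Set.eq_empty_of_forall_notMem fun z hz => ?_
  obtain ⟨c₀, hc₀, -⟩ := hC (Classical.arbitrary K)
  obtain ⟨x, -, rfl⟩ := Set.mem_iInter.mp hz ⟨c₀, hc₀⟩
  obtain ⟨c, hc, hxc⟩ := hC x.1
  obtain ⟨y, hy, hyx⟩ := Set.mem_iInter.mp hz ⟨c, hc⟩
  exact (hxc.trans_lt (lexInr_injective hyx ▸ hy.1 : c < x.1)).false

lemma neBot_tailFilter [Nonempty K] (hM : lam ≤ #M) : (tailFilter K M N hlam).NeBot := by
  have := neBot_coSmall (hlam := hlam) hM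
  unfold tailFilter
  infer_instance

lemma cardinalInterFilter_tailFilter (h : Order.cof K ≤ lam.ord.cof) :
    CardinalInterFilter (tailFilter K M N hlam) (Order.cof K) := by
  have := CardinalInterFilter.of_cardinalInterFilter_of_le (coSmall M hlam) h
  unfold tailFilter
  infer_instance

lemma isFree_tailFilter [Nonempty K] [NoMaxOrder K] (hM : lam ≤ #M) :
    IsFree (tailFilter K M N hlam) :=
  have := neBot_tailFilter (K := K) (N := N) (hlam := hlam) hM
  isFree_of_iInter_eq_empty (fun c : (Set.univ : Set K) => image_Ioi_prod_univ_mem_tailFilter c.1)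
    (iInter_image_Ioi_prod_univ_eq_empty .univ)

lemma psiNum_tailFilter [Nonempty K] [NoMaxOrder K] (h : Order.cof K ≤ lam.ord.cof)
    (hM : lam ≤ #M) : psiNum (filterTop (tailFilter K M N hlam)) none = Order.cof K := by
  have := neBot_tailFilter (K := K) (N := N) (hlam := hlam) hM
  have := cardinalInterFilter_tailFilter (M := M) (N := N) (hlam := hlam) h
  obtain ⟨C, hC, hCcof⟩ := Order.exists_cof_eq K
  exact psiNum_filterTop_eq (fun c : C => image_Ioi_prod_univ_mem_tailFilter c.1)
    (iInter_image_Ioi_prod_univ_eq_empty hC) hCcof.le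

lemma aNum_tailFilter [Nonempty K] (hK : #K ≤ lam) (hM : lam ≤ #M) :
    aNum (filterTop (tailFilter K M N hlam)) none = lam := by
  obtain ⟨E, hE⟩ := le_mk_iff_exists_set.mp hM
  refine aNum_filterTop_eq (A := lexInr '' (Set.univ ×ˢ E)) ?_ ?_ fun B hB => ?_
  · have hfreq : ∃ᶠ m in coSmall M hlam, m ∈ E := fun hE' =>
      ((mem_coSmall (s := Eᶜ)).mp hE').ne (by rw [compl_compl, hE])
    rw [← map_snd_prod (atTop : Filter K) (coSmall M hlam), frequently_map] at hfreq
    exact frequently_map.mpr (hfreq.mono fun x hx => ⟨x, ⟨trivial, hx⟩, rfl⟩)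
  · calc #(lexInr '' (Set.univ ×ˢ E) : Set (N ⊕ₗ (K ×ₗ M)))
          ≤ #(Set.univ ×ˢ E) := mk_image_le
      _ = #K * lam := by rw [mk_congr (Equiv.Set.prod _ _), mk_prod, lift_id, lift_id, mk_univ, hE]
      _ ≤ lam := by grw [hK, mul_eq_self hlam]
  · have hsnd : #(Prod.snd '' (lexInr ⁻¹' B)) < lam :=
      (mk_image_le.trans (mk_preimage_of_injective _ _ lexInr_injective)).trans_lt hB
    refine mem_map.mpr (mem_of_superset (prod_mem_prod univ_mem
      (show (Prod.snd '' (lexInr ⁻¹' B))ᶜ ∈ coSmall M hlam by simpa using hsnd)) ?_)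
    exact fun x hx hxB => hx.2 ⟨x, hxB, rfl⟩

lemma fNorm_tailFilter [Nonempty K] (hK : #K ≤ #M) (hM : lam ≤ #M) :
    fNorm (tailFilter K M N hlam) = #M := by
  have hmem : #(Set.range (lexInr : K × M → N ⊕ₗ (K ×ₗ M))) ∈
      {c | ∃ P ∈ tailFilter K M N hlam, c = #P} := ⟨_, range_mem_map, rfl⟩
  refine le_antisymm ((csInf_le' hmem).trans (mk_range_le.trans ?_)) (le_csInf ⟨_, hmem⟩ ?_)
  · rw [mk_prod, lift_id, lift_id]
    grw [hK, mul_eq_self (hlam.trans hM)]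
  rintro _ ⟨P, hP, rfl⟩
  obtain ⟨t₁, ht₁, t₂, ht₂, hsub⟩ := mem_prod_iff.mp (mem_map.mp hP)
  obtain ⟨a, ha⟩ := Filter.nonempty_of_mem ht₁
  calc #M = #t₂ := (mk_eq_of_mem_coSmall ht₂ hM).symm
    _ = #((fun m => lexInr (a, m)) '' t₂ : Set (N ⊕ₗ (K ×ₗ M))) :=
      (mk_image_eq (lexInr_injective.comp (Prod.mk_right_injective a))).symm
    _ ≤ #P := mk_le_mk_of_subset (Set.image_subset_iff.mpr fun m hm => hsub ⟨ha, hm⟩)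

end TailFilter

end FilterSpace

open FilterSpace

/-- For infinite cardinals `κ ≤ cf(λ) ≤ λ ≤ μ ≤ ν` with `κ` regular, there is
a set `Z` with `|Z| = ν` and a free filter `p` on `Z` such that `Z_p` is weakly
`p`-orderable, `ψ(Z_p) = κ`, `a(Z_p) = λ` and `‖p‖ = μ`. -/
theorem stmt10 (κ lam μ ν : Cardinal.{u})
    (hκ : Cardinal.aleph0 ≤ κ) (hlam : Cardinal.aleph0 ≤ lam)
    (hμ : Cardinal.aleph0 ≤ μ) (hν : Cardinal.aleph0 ≤ ν)
    (hregκ : κ.ord.cof = κ)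
    (h1 : κ ≤ lam.ord.cof) (h2 : lam ≤ μ) (h3 : μ ≤ ν) :
    ∃ (Z : Type u) (p : Filter Z), Cardinal.mk Z = ν ∧ IsFree p ∧
      WeaklyPOrderable (filterTop p) (none : Option Z) ∧
      psiNum (filterTop p) (none : Option Z) = κ ∧
      aNum (filterTop p) (none : Option Z) = lam ∧
      fNorm p = μ := by
  have hκlam : κ ≤ lam := h1.trans (Ordinal.cof_ord_le lam)
  have : Nonempty κ.ord.ToType :=
    Ordinal.nonempty_toType_iff.mpr (ord_pos.mpr (aleph0_pos.trans_le hκ)).ne'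
  have := Cardinal.noMaxOrder hκ
  have hcof : Order.cof κ.ord.ToType = κ := by rw [Ordinal.cof_toType, hregκ]
  have hM : lam ≤ #μ.ord.ToType := (mk_ord_toType μ).symm ▸ h2
  refine ⟨ν.ord.ToType ⊕ₗ (κ.ord.ToType ×ₗ μ.ord.ToType), tailFilter _ _ _ hlam, ?_,
    isFree_tailFilter hM, weaklyPOrderable_filterTop Ioi_mem_tailFilter,
    (psiNum_tailFilter (hcof.trans_le h1) hM).trans hcof,
    aNum_tailFilter ((mk_ord_toType κ).trans_le hκlam) hM,
    (fNorm_tailFilter (by simpa using hκlam.trans h2) hM).trans (mk_ord_toType μ)⟩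
  change #(ν.ord.ToType ⊕ (κ.ord.ToType × μ.ord.ToType)) = ν
  rw [mk_sum, mk_prod]
  simp only [lift_id, mk_ord_toType]
  rw [mul_eq_right hμ (hκlam.trans h2) (aleph0_pos.trans_le hκ).ne', add_eq_left hν h3]
end

section
/- If X_p is a weakly p-orderable filter space, then the product space X_p × X_p is weakly orderable by a linear order in which (p, p) is the maximum element. -/
open Set

universe u v w y

/-!
Let `p = ⊤` be the maximum of the given order on `X_p`. Order `X_p × X_p` lexicographically by
the key `(min z, [z₂ < z₁], max z)`: the pairs with minimum `m` form an L-shaped set, traversed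
first along the arm `{m} × [m, ⊤]` and then along the arm `(m, ⊤] × {m}`. Every non-isolated
point `z` of the product has a coordinate `⊤`, and near `z ≠ (⊤, ⊤)` the key varies only in its
last entry `max w`, which approaches `⊤` from below. Hence every point is a local maximum of the
key and, away from `(⊤, ⊤)`, the key is lower semicontinuous; both facts make the open rays open.
-/

open Filter Topology Function

theorem LowerSemicontinuousAt.toLex_mk {α β γ : Type*} [TopologicalSpace α] [Preorder β]
    [Preorder γ] {f : α → β} {x : α} (hf : LowerSemicontinuousAt f x) (c : γ) :
    LowerSemicontinuousAt (fun x ↦ toLex (c, f x)) x := by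
  intro k hk
  rcases Prod.Lex.lt_iff.1 hk with h | ⟨h, h'⟩
  · exact .of_forall fun _ ↦ Prod.Lex.lt_iff.2 (Or.inl h)
  · filter_upwards [hf _ h'] with y hy using Prod.Lex.lt_iff.2 (Or.inr ⟨h, hy⟩)

theorem LowerSemicontinuousAt.congr_of_eventuallyEq {α β : Type*} [TopologicalSpace α] [Preorder β]
    {f g : α → β} {x : α} (hf : LowerSemicontinuousAt f x) (hfg : f =ᶠ[𝓝 x] g) :
    LowerSemicontinuousAt g x := by
  intro k hk
  rw [← hfg.eq_of_nhds] at hk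
  filter_upwards [hf k hk, hfg] with y hy hfgy using hfgy ▸ hy

section LexKey

variable {L : Type*} [LinearOrder L]

def lexKey (z : L × L) : L ×ₗ Bool ×ₗ L :=
  toLex (min z.1 z.2, toLex (decide (z.2 < z.1), max z.1 z.2))

theorem lexKey_injective : Injective (lexKey (L := L)) := by
  rintro ⟨x₁, y₁⟩ ⟨x₂, y₂⟩ h
  simp only [lexKey, toLex_inj, Prod.mk.injEq, decide_eq_decide] at h ⊢
  grind

variable [OrderTop L]

theorem lexKey_le_lexKey_top (z : L × L) : lexKey z ≤ lexKey (⊤, ⊤) := by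
  obtain ⟨x, y⟩ := z
  obtain hxy | hxy := (le_top : min x y ≤ ⊤).lt_or_eq
  · exact (Prod.Lex.lt_iff.2 (Or.inl (by simpa [lexKey] using hxy))).le
  · obtain ⟨rfl, rfl⟩ := min_eq_top.1 hxy
    rfl

variable [TopologicalSpace L]

theorem isLocalMax_id_of_isOpen_singleton (hiso : ∀ x : L, x ≠ ⊤ → IsOpen {x}) (x : L) :
    IsLocalMax id x := by
  rcases eq_or_ne x ⊤ with rfl | hx
  · exact .of_forall fun _ ↦ le_top
  · filter_upwards [(hiso x hx).mem_nhds rfl] with y (rfl : y = x) using le_rfl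

theorem eventually_lexKey_eq (hIoi : ∀ a : L, IsOpen (Ioi a))
    (hiso : ∀ x : L, x ≠ ⊤ → IsOpen {x}) {z : L × L} (hz : z ≠ (⊤, ⊤)) :
    lexKey =ᶠ[𝓝 z] fun w ↦ toLex (min z.1 z.2, toLex (decide (z.2 < z.1), max w.1 w.2)) := by
  obtain ⟨x, y⟩ := z
  rw [nhds_prod_eq]
  rcases eq_or_ne x ⊤ with rfl | hx <;> rcases eq_or_ne y ⊤ with rfl | hy
  · exact absurd rfl hz
  · filter_upwards [prod_mem_prod ((hIoi y).mem_nhds hy.lt_top) ((hiso y hy).mem_nhds rfl)]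
    rintro ⟨w, _⟩ ⟨hw : y < w, rfl : _ = y⟩
    simp [lexKey, hw, hw.le, hy.lt_top]
  · filter_upwards [prod_mem_prod ((hiso x hx).mem_nhds rfl) ((hIoi x).mem_nhds hx.lt_top)]
    rintro ⟨_, w⟩ ⟨hx' : _ = x, hw : x < w⟩
    subst hx'
    simp [lexKey, hw.le]
  · filter_upwards [prod_mem_prod ((hiso x hx).mem_nhds rfl) ((hiso y hy).mem_nhds rfl)]
    rintro ⟨_, _⟩ ⟨rfl, rfl⟩
    rfl

theorem isLocalMax_lexKey (hIoi : ∀ a : L, IsOpen (Ioi a))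
    (hiso : ∀ x : L, x ≠ ⊤ → IsOpen {x}) (z : L × L) : IsLocalMax lexKey z := by
  rcases eq_or_ne z (⊤, ⊤) with rfl | hz
  · exact .of_forall lexKey_le_lexKey_top
  have hmax : IsLocalMax (fun w : L × L ↦ max w.1 w.2) z :=
    ((isLocalMax_id_of_isOpen_singleton hiso _).comp_continuous continuous_fst.continuousAt).sup
      ((isLocalMax_id_of_isOpen_singleton hiso _).comp_continuous continuous_snd.continuousAt)
  have hmono : Monotone fun b : L ↦ toLex (min z.1 z.2, toLex (decide (z.2 < z.1), b)) :=
    fun _ _ hbc ↦ Prod.Lex.toLex_mono ⟨le_rfl, Prod.Lex.toLex_mono ⟨le_rfl, hbc⟩⟩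
  exact (hmax.comp_mono hmono).congr (eventually_lexKey_eq hIoi hiso hz).symm

theorem lowerSemicontinuousAt_lexKey (hIoi : ∀ a : L, IsOpen (Ioi a))
    (hiso : ∀ x : L, x ≠ ⊤ → IsOpen {x}) {z : L × L} (hz : z ≠ (⊤, ⊤)) :
    LowerSemicontinuousAt lexKey z := by
  have hid : LowerSemicontinuous (id : L → L) := lowerSemicontinuous_iff_isOpen_preimage.2 hIoi
  have hmax : LowerSemicontinuousAt (fun w : L × L ↦ max w.1 w.2) z :=
    LowerSemicontinuousAt.sup (hid.comp continuous_fst z) (hid.comp continuous_snd z)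
  exact LowerSemicontinuousAt.congr_of_eventuallyEq
    (LowerSemicontinuousAt.toLex_mk (LowerSemicontinuousAt.toLex_mk hmax _) _)
    (eventually_lexKey_eq hIoi hiso hz).symm

/-- The key is not lower semicontinuous at `(⊤, ⊤)`: keys `(⊤, b, x)` with `x < ⊤` lie just below
`lexKey (⊤, ⊤)` but are not attained. -/
theorem eventually_lt_lexKey_of_lt_lexKey_top (hIoi : ∀ a : L, IsOpen (Ioi a)) {a : L × L}
    (ha : lexKey a < lexKey (⊤, ⊤)) : ∀ᶠ w in 𝓝 (⊤, ⊤), lexKey a < lexKey w := by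
  have hmin : min a.1 a.2 < ⊤ := by
    refine lt_top_iff_ne_top.2 fun h ↦ ha.ne ?_
    obtain ⟨h₁, h₂⟩ := min_eq_top.1 h
    exact congrArg lexKey (Prod.ext h₁ h₂)
  rw [nhds_prod_eq]
  filter_upwards [prod_mem_prod ((hIoi _).mem_nhds hmin) ((hIoi _).mem_nhds hmin)]
  rintro ⟨w₁, w₂⟩ ⟨hw₁, hw₂⟩
  exact Prod.Lex.lt_iff.2 (Or.inl (lt_min hw₁ hw₂))

theorem isOpen_lexKey_lt (hIoi : ∀ a : L, IsOpen (Ioi a))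
    (hiso : ∀ x : L, x ≠ ⊤ → IsOpen {x}) (k : L ×ₗ Bool ×ₗ L) :
    IsOpen {w : L × L | lexKey w < k} :=
  isOpen_iff_mem_nhds.2 fun z hz ↦
    (isLocalMax_lexKey hIoi hiso z).mono fun _ hw ↦ hw.trans_lt hz

theorem isOpen_lexKey_gt (hIoi : ∀ a : L, IsOpen (Ioi a))
    (hiso : ∀ x : L, x ≠ ⊤ → IsOpen {x}) (a : L × L) :
    IsOpen {w : L × L | lexKey a < lexKey w} := by
  refine isOpen_iff_mem_nhds.2 fun z hz ↦ ?_
  rcases eq_or_ne z (⊤, ⊤) with rfl | hz'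
  · exact eventually_lt_lexKey_of_lt_lexKey_top hIoi hz
  · exact lowerSemicontinuousAt_lexKey hIoi hiso hz' _ hz

end LexKey

theorem woBy_of_isOpen_rays {Z : Type*} {t : TopologicalSpace Z} {r : LinearOrder Z}
    (h : ∀ a, IsOpen[t] {z | r.lt z a} ∧ IsOpen[t] {z | r.lt a z}) : WOBy t r :=
  TopologicalSpace.le_def.1 <| le_generateFrom <| by
    rintro _ ⟨a, rfl | rfl⟩
    exacts [(h a).1, (h a).2]

theorem filterTop_isOpen_singleton_some {X : Type*} (p : Filter X) (x : X) :
    IsOpen[filterTop p] {some x} := by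
  intro h
  simp at h

theorem stmt15_general {X : Type u} (p : Filter X)
    (h : WeaklyPOrderable (filterTop p) (none : Option X)) :
    ∃ r : LinearOrder (Option X × Option X),
      WOBy (prodTop (filterTop p) (filterTop p)) r ∧
      ∀ z : Option X × Option X, r.le z (none, none) := by
  obtain ⟨r, hwo, hmax⟩ := h
  let _ : LinearOrder (Option X) := r
  let _ : OrderTop (Option X) := { top := none, le_top := hmax }
  let _ : TopologicalSpace (Option X) := filterTop p
  have hIoi (a : Option X) : IsOpen (Ioi a) := hwo _ (.basic _ ⟨a, Or.inr rfl⟩)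
  have hiso (x : Option X) (hx : x ≠ ⊤) : IsOpen {x} := by
    obtain ⟨x, rfl⟩ := Option.ne_none_iff_exists'.1 hx
    exact filterTop_isOpen_singleton_some p x
  exact ⟨LinearOrder.lift' lexKey lexKey_injective,
    woBy_of_isOpen_rays fun a ↦ ⟨isOpen_lexKey_lt hIoi hiso _, isOpen_lexKey_gt hIoi hiso a⟩,
    lexKey_le_lexKey_top⟩

/-- If `X_p` is a weakly `p`-orderable filter space, then `X_p × X_p` is
weakly orderable by a linear order in which `(p, p)` is the maximum. -/
theorem stmt15 {X : Type u} [Infinite X] (p : Filter X) (hfree : IsFree p)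
    (h : WeaklyPOrderable (filterTop p) (none : Option X)) :
    ∃ r : LinearOrder (Option X × Option X),
      WOBy (prodTop (filterTop p) (filterTop p)) r ∧
      ∀ z : Option X × Option X, r.le z (none, none) :=
  stmt15_general p h
end

section
/- Let κ be an uncountable regular cardinal and let S be a stationary subset of κ, equipped with the subspace topology induced by the order topology on κ. Then S is non-discrete and a(S) < κ; that is, there is a non-isolated point p of S and a set A ⊆ S \ {p} of cardinality less than κ with p ∈ closure(A). -/
open Set

universe u v w y

/-!
Since `κ` has uncountable cofinality and the stationary set `S` is unbounded in `κ`, the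
accumulation points of `S` below `κ` form a club, so `S` contains one of them, `p`. Then `p` lies
in the closure of `S ∩ [0, p)`, a set of cardinality `|p| < κ` not containing `p`; in particular
`p` is not isolated in `S`.
-/

open Cardinal Filter Topology Order

theorem ordTop_eq {Z : Type u} [LinearOrder Z] [t : TopologicalSpace Z] [OrderTopology Z] :
    ordTop (inferInstance : LinearOrder Z) = t := by
  rw [OrderTopology.topology_eq_generate_intervals (α := Z), ordTop]
  congr 1
  ext s
  exact exists_congr fun a => or_comm

theorem not_isOpen_singleton_of_mem_closure {X : Type*} [TopologicalSpace X] {p : X} {A : Set X}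
    (hp : p ∈ closure A) (hpA : p ∉ A) : ¬ IsOpen ({p} : Set X) := fun hopen => by
  obtain ⟨x, rfl, hx⟩ := mem_closure_iff.1 hp _ hopen rfl
  exact hpA hx

theorem mem_closure_inter_Iio_of_accPt {α : Type*} [LinearOrder α] [TopologicalSpace α]
    [OrderTopology α] [SuccOrder α] [NoMaxOrder α] {S : Set α} {p : α} (hp : AccPt p (𝓟 S)) :
    p ∈ closure (S ∩ Iio p) := by
  rw [SuccOrder.accPt_principal] at hp
  refine mem_closure_iff_clusterPt.2 (AccPt.clusterPt (SuccOrder.accPt_principal.2 ⟨hp.1, ?_⟩))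
  intro b hb
  obtain ⟨s, hsS, hs⟩ := hp.2 b hb
  exact ⟨s, ⟨hsS, hs.2⟩, hs⟩

theorem club_Ioo {o α : Ordinal.{u}} (ho : IsSuccLimit o) (hα : α < o) : Club o (Ioo α o) := by
  refine ⟨fun _ hx => hx.2, fun β hβ => ?_, fun β hβ hβlim hbelow => ?_⟩
  · exact ⟨max (succ α) β, ⟨(lt_succ α).trans_le (le_max_left _ _),
      max_lt (ho.succ_lt hα) hβ⟩, le_max_right _ _⟩
  · obtain ⟨γ, hγ, -, hγβ⟩ := hbelow 0 hβlim.pos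
    exact ⟨hγ.1.trans hγβ, hβ⟩

theorem StationaryIn.inter_Ioo_nonempty {o α : Ordinal.{u}} {S : Set Ordinal.{u}}
    (hS : StationaryIn o S) (ho : IsSuccLimit o) (hα : α < o) : (S ∩ Ioo α o).Nonempty :=
  hS.2 _ (club_Ioo ho hα)

/-- The witness is the supremum of an `ω`-sequence in `S`, each term chosen above the previous
one; it stays below `o` because `cof o > ℵ₀`. -/
theorem exists_accPt_of_aleph0_lt_cof {o α : Ordinal.{u}} {S : Set Ordinal.{u}}
    (hcof : ℵ₀ < o.cof) (hS : ∀ α < o, (S ∩ Ioo α o).Nonempty) (hα : α < o) :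
    ∃ β, α ≤ β ∧ β < o ∧ AccPt β (𝓟 S) := by
  choose! next hnextS hnext using hS
  set f : ℕ → Ordinal.{u} := fun n => next^[n] α
  have hf_succ (n : ℕ) : f (n + 1) = next (f n) := Function.iterate_succ_apply' next n α
  have hf_lt (n : ℕ) : f n < o := by
    induction n with
    | zero => exact hα
    | succ n ih => rw [hf_succ]; exact (hnext _ ih).2
  have hf_mono (n : ℕ) : f n < f (n + 1) := by rw [hf_succ]; exact (hnext _ (hf_lt n)).1
  have hf_le (n : ℕ) : f n ≤ ⨆ n, f n := Ordinal.le_iSup f n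
  refine ⟨⨆ n, f n, hf_le 0, Ordinal.lift_iSup_lt_of_lt_cof (by simpa using hcof) hf_lt, ?_⟩
  refine SuccOrder.accPt_principal.2 ⟨fun hmin => ?_, fun b hb => ?_⟩
  · exact not_isMin_iff.2 ⟨f 0, (hf_mono 0).trans_le (hf_le 1)⟩ hmin
  · obtain ⟨n, hn⟩ := Ordinal.lt_iSup_iff.1 hb
    refine ⟨f (n + 1), ?_, hn.trans (hf_mono n),
      (hf_mono (n + 1)).trans_le (hf_le (n + 2))⟩
    rw [hf_succ]
    exact hnextS _ (hf_lt n)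

theorem club_Iio_inter_derivedSet {o : Ordinal.{u}} {S : Set Ordinal.{u}}
    (hcof : ℵ₀ < o.cof) (hS : ∀ α < o, (S ∩ Ioo α o).Nonempty) :
    Club o (Iio o ∩ derivedSet S) := by
  refine ⟨inter_subset_left, fun α hα => ?_, fun α hα hαlim hbelow => ⟨hα, ?_⟩⟩
  · obtain ⟨β, hαβ, hβ, hacc⟩ := exists_accPt_of_aleph0_lt_cof hcof hS hα
    exact ⟨β, ⟨hβ, hacc⟩, hαβ⟩
  · refine SuccOrder.accPt_principal.2 ⟨hαlim.not_isMin, fun b hb => ?_⟩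
    obtain ⟨γ, ⟨-, hγacc⟩, hbγ, hγα⟩ := hbelow (succ b) (hαlim.succ_lt hb)
    obtain ⟨s, hsS, hs⟩ := (SuccOrder.accPt_principal.1 hγacc).2 b (succ_le_iff.1 hbγ)
    exact ⟨s, hsS, hs.1, hs.2.trans hγα⟩

theorem mk_preimage_val_Iio_lt {κ : Cardinal.{u}} {S : Set Ordinal.{u}} {p : Ordinal.{u}}
    (hp : p < κ.ord) : #(Subtype.val ⁻¹' Iio p : Set S) < lift.{u + 1} κ :=
  calc #(Subtype.val ⁻¹' Iio p : Set S)
      ≤ #(Iio p) := mk_preimage_of_injective _ _ Subtype.val_injective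
    _ = lift.{u + 1} p.card := mk_Iio_ordinal p
    _ < lift.{u + 1} κ := lift_lt.2 (lt_ord.1 hp)

/-- Let `κ` be an uncountable regular cardinal and `S` a stationary subset
of `κ` with the subspace topology from the order topology. Then `S` is non-discrete and
`a(S) < κ`: there is a non-isolated point `p` of `S` and a set `A ⊆ S \ {p}` of
cardinality `< κ` with `p ∈ closure A`. -/
theorem stmt17 (κ : Cardinal.{u}) (huncount : Cardinal.aleph0 < κ)
    (hreg : κ.ord.cof = κ)
    (S : Set Ordinal.{u}) (hS : StationaryIn κ.ord S) :
    ∃ p : ↥S,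
      ¬ (subTop (ordTop (inferInstance : LinearOrder Ordinal.{u})) S).IsOpen
          ({p} : Set ↥S) ∧
      ∃ A : Set ↥S, p ∉ A ∧
        p ∈ @closure ↥S (subTop (ordTop (inferInstance : LinearOrder Ordinal.{u})) S) A ∧
        Cardinal.mk ↥A < Cardinal.lift.{u + 1} κ := by
  rw [subTop, ordTop_eq]
  have hunbounded : ∀ α < κ.ord, (S ∩ Ioo α κ.ord).Nonempty :=
    fun _ => hS.inter_Ioo_nonempty (isSuccLimit_ord huncount.le)
  have hclub := club_Iio_inter_derivedSet (by rwa [hreg]) hunbounded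
  obtain ⟨p, hpS, hpκ, hpacc⟩ := hS.2 _ hclub
  have hclosure : (⟨p, hpS⟩ : S) ∈ closure (Subtype.val ⁻¹' Iio p) := by
    rw [closure_subtype, image_preimage_eq_inter_range, Subtype.range_coe, inter_comm]
    exact mem_closure_inter_Iio_of_accPt hpacc
  have hpA : (⟨p, hpS⟩ : S) ∉ Subtype.val ⁻¹' Iio p := lt_irrefl p
  exact ⟨⟨p, hpS⟩, not_isOpen_singleton_of_mem_closure hclosure hpA, _, hpA, hclosure,
    mk_preimage_val_Iio_lt hpκ⟩
end
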